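/- arXiv:1012.2395 — 5 statements merged into one kernel-verified Lean document; each statement's English description precedes it below -/
import Mathlib

section
/- Under Assumption A on the velocity field and for any initial datum μ̄ ∈ P₁(ℝ^d) ∩ P₂(ℝ^d), there exists a weak solution μ : [0,T] → P₁(ℝ^d) (continuous with respect to W₁) of the Cauchy problem ∂_t μ_t + ∇·(μ_t v[μ_t]) = 0 in ℝ^d × (0,T], μ₀ = μ̄. -/
open MeasureTheory Metric Filter

noncomputable section

abbrev Euc (d : ℕ) := EuclideanSpace ℝ (Fin d)

/-- `P1 μ`: μ is a Borel probability measure with finite first moment. -/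
def P1 {d : ℕ} (μ : Measure (Euc d)) : Prop :=
  IsProbabilityMeasure μ ∧ Integrable (fun x => ‖x‖) μ

/-- `P2 μ`: μ is a Borel probability measure with finite second moment. -/
def P2 {d : ℕ} (μ : Measure (Euc d)) : Prop :=
  IsProbabilityMeasure μ ∧ Integrable (fun x => ‖x‖ ^ 2) μ

/-- The Wasserstein distance `W₁(μ,ν) = sup {∫ φ dν − ∫ φ dμ : φ 1-Lipschitz}`. -/
def W1 {d : ℕ} (μ ν : Measure (Euc d)) : ℝ :=
  ⨆ φ : {φ : Euc d → ℝ // LipschitzWith 1 φ}, (∫ x, φ.1 x ∂ν - ∫ x, φ.1 x ∂μ)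

/-- Assumption A on the velocity field. -/
def AssumptionA {d : ℕ} (v : Measure (Euc d) → Euc d → Euc d) (V L : ℝ) : Prop :=
  0 < V ∧ 0 < L ∧
  (∀ μ, P1 μ → ∀ x, ‖v μ x‖ ≤ V) ∧
  (∀ μ ν, P1 μ → P1 ν → ∀ x y, ‖v ν y - v μ x‖ ≤ L * (‖y - x‖ + W1 μ ν)) ∧
  (∀ μ ν, P1 μ → P1 ν → ∀ α : ℝ, 0 ≤ α → α ≤ 1 → ∀ x,
    v (ENNReal.ofReal α • μ + ENNReal.ofReal (1 - α) • ν) x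
      = α • v μ x + (1 - α) • v ν x)

/-- Continuity of a curve of measures with respect to the `W₁` metric, on `[0,T]`. -/
def W1ContinuousOn {d : ℕ} (μ : ℝ → Measure (Euc d)) (T : ℝ) : Prop :=
  ∀ t ∈ Set.Icc (0:ℝ) T, ∀ ε > 0, ∃ δ > 0,
    ∀ s ∈ Set.Icc (0:ℝ) T, |s - t| < δ → W1 (μ s) (μ t) < ε

/-- Weak solution of the Cauchy problem ∂ₜμ + ∇·(μ v[μ]) = 0, μ₀ = μ̄, on [0,T]. -/
def IsWeakSolution {d : ℕ} (v : Measure (Euc d) → Euc d → Euc d) (T : ℝ)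
    (μbar : Measure (Euc d)) (μ : ℝ → Measure (Euc d)) : Prop :=
  (∀ t ∈ Set.Icc (0:ℝ) T, P1 (μ t)) ∧ W1ContinuousOn μ T ∧
  ∀ φ : Euc d → ℝ, ContDiff ℝ (⊤ : ℕ∞) φ → HasCompactSupport φ →
    ∀ t ∈ Set.Icc (0:ℝ) T,
      ∫ x, φ x ∂(μ t) = (∫ x, φ x ∂μbar) +
        ∫ τ in (0:ℝ)..t, ∫ x, (inner ℝ (v (μ τ) x) (gradient φ x) : ℝ) ∂(μ τ)

/-- One step of the semi-discrete scheme: push forward by the one-step flow map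
`γ(x) = x + v[μ](x) Δt`. -/
def flowStep {d : ℕ} (v : Measure (Euc d) → Euc d → Euc d) (Δt : ℝ)
    (μ : Measure (Euc d)) : Measure (Euc d) :=
  μ.map (fun x => x + Δt • v μ x)

/-- The semi-discrete scheme `μ₀ = μ̄`, `μ_{n+1} = γ_n # μ_n`. -/
def sdScheme {d : ℕ} (v : Measure (Euc d) → Euc d → Euc d) (μbar : Measure (Euc d))
    (Δt : ℝ) : ℕ → Measure (Euc d)
  | 0 => μbar
  | n + 1 => flowStep v Δt (sdScheme v μbar Δt n)

/-- Linear-in-time interpolation of a sequence of measures with time step `Δt`. -/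
def interp {d : ℕ} (μseq : ℕ → Measure (Euc d)) (Δt : ℝ) (t : ℝ) : Measure (Euc d) :=
  ENNReal.ofReal (1 - (t - ⌊t / Δt⌋₊ * Δt) / Δt) • μseq ⌊t / Δt⌋₊ +
    ENNReal.ofReal ((t - ⌊t / Δt⌋₊ * Δt) / Δt) • μseq (⌊t / Δt⌋₊ + 1)

/-- Index of the grid cell containing `x`: `x_l ∈ [(i_l − 1/2)h, (i_l + 1/2)h)`. -/
def cellIdx {d : ℕ} (h : ℝ) (x : Euc d) : Fin d → ℤ := fun l => ⌊x l / h + 1 / 2⌋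

/-- Center `x_i = i h` of the grid cell with index `i`. -/
def cellCenter {d : ℕ} (h : ℝ) (i : Fin d → ℤ) : Euc d :=
  (EuclideanSpace.equiv (Fin d) ℝ).symm (fun l => (i l : ℝ) * h)

/-- The grid cell `E_i = ∏_l [(i_l − 1/2)h, (i_l + 1/2)h)`. -/
def cell {d : ℕ} (h : ℝ) (i : Fin d → ℤ) : Set (Euc d) := {x | cellIdx h x = i}

/-- Piecewise-constant (cellwise) discretization of a measure: the absolutely continuous
measure with density `μ(E_i)/h^d` on the cell `E_i`. -/
def discretize {d : ℕ} (h : ℝ) (μ : Measure (Euc d)) : Measure (Euc d) :=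
  volume.withDensity (fun x => μ (cell h (cellIdx h x)) / ENNReal.ofReal (h ^ d))

/-- The piecewise-constant approximate velocity `v̂[μ](x) = v[μ](x_i)` for `x ∈ E_i`. -/
def vhat {d : ℕ} (v : Measure (Euc d) → Euc d → Euc d) (h : ℝ)
    (μ : Measure (Euc d)) : Euc d → Euc d :=
  fun x => v μ (cellCenter h (cellIdx h x))

/-- The fully discrete scheme: `λ₀ = discretization of μ̄`,
`λ_{n+1} = discretization of γ̂_n # λ_n` with `γ̂_n(x) = x + v̂[λ_n](x) Δt`. -/
def fdScheme {d : ℕ} (v : Measure (Euc d) → Euc d → Euc d) (μbar : Measure (Euc d))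
    (h Δt : ℝ) : ℕ → Measure (Euc d)
  | 0 => discretize h μbar
  | n + 1 =>
      discretize h ((fdScheme v μbar h Δt n).map
        (fun x => x + Δt • vhat v h (fdScheme v μbar h Δt n) x))

/-- Uniform-in-time convergence on `[0,T]` with respect to `W₁`. -/
def UnifW1Tendsto {d : ℕ} (Λ : ℕ → ℝ → Measure (Euc d)) (μ : ℝ → Measure (Euc d))
    (T : ℝ) : Prop :=
  ∀ ε > 0, ∃ K : ℕ, ∀ k ≥ K, ∀ t ∈ Set.Icc (0:ℝ) T, W1 (Λ k t) (μ t) < ε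


open Topology

namespace MFG

instance instNE (d : ℕ) : Nonempty {φ : Euc d → ℝ // LipschitzWith 1 φ} :=
  ⟨⟨fun _ => 0, (LipschitzWith.const 0).weaken (zero_le_one)⟩⟩

lemma W1_self {d : ℕ} (μ : Measure (Euc d)) : W1 μ μ = 0 := by
  unfold W1
  simp only [sub_self]
  exact ciSup_const

variable {d : ℕ} {μbar : Measure (Euc d)}

lemma P1_map (h1 : P1 μbar) {g : Euc d → Euc d} (hg : Continuous g) {C : ℝ}
    (hb : ∀ z, ‖g z‖ ≤ ‖z‖ + C) : P1 (μbar.map g) := by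
  haveI := h1.1
  refine ⟨Measure.isProbabilityMeasure_map hg.aemeasurable, ?_⟩
  rw [integrable_map_measure continuous_norm.aestronglyMeasurable hg.aemeasurable]
  refine (h1.2.add (integrable_const C)).mono'
    (continuous_norm.comp hg).aestronglyMeasurable ?_
  filter_upwards with z
  simpa using hb z

lemma lip_integrable (h1 : P1 μbar) {φ : Euc d → ℝ} (hφ : LipschitzWith 1 φ)
    {g : Euc d → Euc d} (hg : Continuous g) {C : ℝ} (hb : ∀ z, ‖g z‖ ≤ ‖z‖ + C) :
    Integrable (fun z => φ (g z)) μbar := by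
  haveI := h1.1
  refine (h1.2.add (integrable_const (C + |φ 0|))).mono'
    (hφ.continuous.comp hg).aestronglyMeasurable ?_
  filter_upwards with z
  have h2 := hφ.dist_le_mul (g z) 0
  rw [Real.dist_eq, NNReal.coe_one, one_mul, dist_zero_right] at h2
  have : |φ (g z)| ≤ |φ (g z) - φ 0| + |φ 0| := by
    calc |φ (g z)| = |(φ (g z) - φ 0) + φ 0| := by ring_nf
    _ ≤ _ := abs_add_le _ _
  have hgb := hb z
  simp only [Real.norm_eq_abs, Pi.add_apply]
  linarith

lemma W1_map_le (h1 : P1 μbar) {f g : Euc d → Euc d} (hf : Continuous f)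
    (hg : Continuous g) {C : ℝ} (hfb : ∀ z, ‖f z‖ ≤ ‖z‖ + C) (hgb : ∀ z, ‖g z‖ ≤ ‖z‖ + C)
    {D : ℝ} (hD : ∀ z, ‖g z - f z‖ ≤ D) :
    W1 (μbar.map f) (μbar.map g) ≤ ∫ z, ‖g z - f z‖ ∂μbar := by
  haveI := h1.1
  apply ciSup_le
  rintro ⟨φ, hφ⟩
  simp only
  rw [integral_map hg.aemeasurable (hφ.continuous.aestronglyMeasurable),
    integral_map hf.aemeasurable (hφ.continuous.aestronglyMeasurable)]
  have intf := lip_integrable h1 hφ hf hfb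
  have intg := lip_integrable h1 hφ hg hgb
  have intd : Integrable (fun z => ‖g z - f z‖) μbar :=
    (integrable_const D).mono' ((hg.sub hf).norm.aestronglyMeasurable)
      (by filter_upwards with z; simpa using hD z)
  rw [← integral_sub intg intf]
  refine integral_mono (intg.sub intf) intd (fun z => ?_)
  have h2 := hφ.dist_le_mul (g z) (f z)
  rw [Real.dist_eq, NNReal.coe_one, one_mul, dist_eq_norm] at h2
  calc φ (g z) - φ (f z) ≤ |φ (g z) - φ (f z)| := le_abs_self _
  _ ≤ ‖g z - f z‖ := h2

lemma integral_le_of_forall_le (h1 : P1 μbar) {f : Euc d → ℝ} (hf : Continuous f)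
    (h0 : ∀ z, 0 ≤ f z) {C : ℝ} (hC : ∀ z, f z ≤ C) : ∫ z, f z ∂μbar ≤ C := by
  haveI := h1.1
  calc ∫ z, f z ∂μbar ≤ ∫ _z, C ∂μbar := by
        refine integral_mono ?_ (integrable_const C) hC
        exact (integrable_const C).mono' hf.aestronglyMeasurable
          (by filter_upwards with z; rw [Real.norm_eq_abs, abs_of_nonneg (h0 z)]; exact hC z)
  _ = C := by simp

end MFG

namespace MFG2
open MFG

variable {d : ℕ}

abbrev BCF (d : ℕ) := BoundedContinuousFunction (ℝ × Euc d) (Euc d)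

def clp (T t : ℝ) : ℝ := max 0 (min t T)

lemma clp_nonneg (T t : ℝ) : 0 ≤ clp T t := le_max_left _ _

lemma clp_le (T : ℝ) (hT : 0 ≤ T) (t : ℝ) : clp T t ≤ T :=
  max_le hT (min_le_right _ _)

lemma clp_eq {T t : ℝ} (h0 : 0 ≤ t) (h1 : t ≤ T) : clp T t = t := by
  unfold clp; rw [min_eq_left h1, max_eq_right h0]

lemma clp_cont (T : ℝ) : Continuous (clp T) :=
  continuous_const.max (continuous_id.min continuous_const)

def mMeas (μbar : Measure (Euc d)) (Y : BCF d) (s : ℝ) : Measure (Euc d) :=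
  μbar.map (fun z => z + Y (s, z))

def fld (v : Measure (Euc d) → Euc d → Euc d) (μbar : Measure (Euc d))
    (Y : BCF d) (s : ℝ) (x : Euc d) : Euc d :=
  v (mMeas μbar Y s) (x + Y (s, x))

variable {v : Measure (Euc d) → Euc d → Euc d} {V L : ℝ} {μbar : Measure (Euc d)}

lemma cont_addY (Y : BCF d) (s : ℝ) : Continuous fun z : Euc d => z + Y (s, z) :=
  continuous_id.add (Y.continuous.comp (Continuous.prodMk_right s))

lemma bound_addY (Y : BCF d) (s : ℝ) (z : Euc d) : ‖z + Y (s, z)‖ ≤ ‖z‖ + ‖Y‖ :=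
  (norm_add_le _ _).trans (by linarith [Y.norm_coe_le_norm (s, z)])

lemma P1_mMeas (h1 : P1 μbar) (Y : BCF d) (s : ℝ) : P1 (mMeas μbar Y s) :=
  P1_map h1 (cont_addY Y s) (bound_addY Y s)

lemma norm_fld_le (hA : AssumptionA v V L) (h1 : P1 μbar) (Y : BCF d) (s : ℝ) (x : Euc d) :
    ‖fld v μbar Y s x‖ ≤ V :=
  hA.2.2.1 _ (P1_mMeas h1 Y s) _

lemma fld_est (hA : AssumptionA v V L) (h1 : P1 μbar) (Y Z : BCF d) (s s' : ℝ)
    (x x' : Euc d) :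
    ‖fld v μbar Y s x - fld v μbar Z s' x'‖ ≤
      L * (‖(x + Y (s, x)) - (x' + Z (s', x'))‖ + ∫ z, ‖Y (s, z) - Z (s', z)‖ ∂μbar) := by
  have hW : W1 (mMeas μbar Z s') (mMeas μbar Y s) ≤ ∫ z, ‖Y (s, z) - Z (s', z)‖ ∂μbar := by
    have := W1_map_le h1 (cont_addY Z s') (cont_addY Y s)
      (C := max ‖Y‖ ‖Z‖)
      (fun z => (bound_addY Z s' z).trans (by simp [le_max_right]))
      (fun z => (bound_addY Y s z).trans (by simp [le_max_left]))
      (D := ‖Y‖ + ‖Z‖)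
      (fun z => by
        simp only [add_sub_add_left_eq_sub]
        exact (norm_sub_le _ _).trans
          (add_le_add (Y.norm_coe_le_norm _) (Z.norm_coe_le_norm _)))
    simpa only [add_sub_add_left_eq_sub, mMeas] using this
  have := hA.2.2.2.1 (mMeas μbar Z s') (mMeas μbar Y s)
    (P1_mMeas h1 Z s') (P1_mMeas h1 Y s) (x' + Z (s', x')) (x + Y (s, x))
  refine this.trans ?_
  have hL : 0 ≤ L := hA.2.1.le
  nlinarith [norm_nonneg ((x + Y (s, x)) - (x' + Z (s', x')))]

lemma tendsto_I (h1 : P1 μbar) (Y : BCF d) (s₀ : ℝ) :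
    Tendsto (fun s => ∫ z, ‖Y (s, z) - Y (s₀, z)‖ ∂μbar) (𝓝 s₀) (𝓝 0) := by
  haveI := h1.1
  have h := tendsto_integral_filter_of_dominated_convergence
    (μ := μbar) (F := fun s z => ‖Y (s, z) - Y (s₀, z)‖) (f := fun _ => (0:ℝ))
    (bound := fun _ => ‖Y‖ + ‖Y‖) (l := 𝓝 s₀)
    (by
      filter_upwards with s
      exact ((Y.continuous.comp (Continuous.prodMk_right s)).sub
        (Y.continuous.comp (Continuous.prodMk_right s₀))).norm.aestronglyMeasurable)
    (by
      filter_upwards with s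
      filter_upwards with z
      rw [Real.norm_eq_abs, abs_of_nonneg (norm_nonneg _)]
      exact (norm_sub_le _ _).trans
        (add_le_add (Y.norm_coe_le_norm _) (Y.norm_coe_le_norm _)))
    (integrable_const _)
    (by
      filter_upwards with z
      have hc : Continuous fun s : ℝ => ‖Y (s, z) - Y (s₀, z)‖ :=
        ((Y.continuous.comp (continuous_id.prodMk continuous_const)).sub
          continuous_const).norm
      simpa using hc.tendsto s₀)
  simpa using h

lemma fld_cont (hA : AssumptionA v V L) (h1 : P1 μbar) (Y : BCF d) :
    Continuous fun p : ℝ × Euc d => fld v μbar Y p.1 p.2 := by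
  rw [continuous_iff_continuousAt]
  intro p₀
  rw [ContinuousAt, tendsto_iff_norm_sub_tendsto_zero]
  apply squeeze_zero (fun _ => norm_nonneg _)
    (g := fun p => L * (‖(p.2 + Y (p.1, p.2)) - (p₀.2 + Y (p₀.1, p₀.2))‖ +
      ∫ z, ‖Y (p.1, z) - Y (p₀.1, z)‖ ∂μbar))
  · intro p
    exact fld_est hA h1 Y Y p.1 p₀.1 p.2 p₀.2
  · have hA1 : Tendsto (fun p : ℝ × Euc d =>
        ‖(p.2 + Y (p.1, p.2)) - (p₀.2 + Y (p₀.1, p₀.2))‖) (𝓝 p₀) (𝓝 0) := by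
      have hc : Continuous fun p : ℝ × Euc d =>
          ‖(p.2 + Y (p.1, p.2)) - (p₀.2 + Y (p₀.1, p₀.2))‖ := by
        apply Continuous.norm
        exact (continuous_snd.add (Y.continuous.comp
          (continuous_fst.prodMk continuous_snd))).sub continuous_const
      simpa using hc.tendsto p₀
    have hA2 : Tendsto (fun p : ℝ × Euc d =>
        ∫ z, ‖Y (p.1, z) - Y (p₀.1, z)‖ ∂μbar) (𝓝 p₀) (𝓝 0) :=
      (tendsto_I h1 Y p₀.1).comp (continuous_fst.tendsto p₀)
    have := (hA1.add hA2).const_mul L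
    simpa using this

end MFG2

namespace MFG3
open MFG MFG2

variable {d : ℕ} {v : Measure (Euc d) → Euc d → Euc d} {V L T : ℝ}
  {μbar : Measure (Euc d)}

lemma fld_cont_s (hA : AssumptionA v V L) (h1 : P1 μbar) (Y : BCF d) (x : Euc d) :
    Continuous fun s => fld v μbar Y s x :=
  (fld_cont hA h1 Y).comp (continuous_id.prodMk continuous_const)

lemma fld_cont_x (hA : AssumptionA v V L) (h1 : P1 μbar) (Y : BCF d) (s : ℝ) :
    Continuous fun p : ℝ × Euc d => fld v μbar Y s p.2 :=
  (fld_cont hA h1 Y).comp (continuous_const.prodMk continuous_snd)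

lemma Phi_bound (hA : AssumptionA v V L) (h1 : P1 μbar) (hT : 0 < T) (Y : BCF d)
    (p : ℝ × Euc d) :
    ‖∫ s in (0:ℝ)..(clp T p.1), fld v μbar Y s p.2‖ ≤ V * T := by
  have h := intervalIntegral.norm_integral_le_of_norm_le_const (C := V)
    (f := fun s => fld v μbar Y s p.2) (a := 0) (b := clp T p.1)
    (fun s _ => norm_fld_le hA h1 Y s p.2)
  refine h.trans ?_
  have h0 := clp_nonneg T p.1
  have h2 := clp_le T hT.le p.1
  have habs : |clp T p.1 - 0| ≤ T := by rw [sub_zero, abs_of_nonneg h0]; exact h2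
  exact mul_le_mul_of_nonneg_left habs hA.1.le

lemma Phi_cont (hA : AssumptionA v V L) (h1 : P1 μbar) (Y : BCF d) :
    Continuous fun p : ℝ × Euc d => ∫ s in (0:ℝ)..(clp T p.1), fld v μbar Y s p.2 := by
  rw [continuous_iff_continuousAt]
  intro p₀
  set t₀ := clp T p₀.1 with ht₀
  have hint : ∀ (x : Euc d) (a b : ℝ),
      IntervalIntegrable (fun s => fld v μbar Y s x) volume a b :=
    fun x a b => (fld_cont_s hA h1 Y x).intervalIntegrable a b
  rw [ContinuousAt, tendsto_iff_norm_sub_tendsto_zero]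
  apply squeeze_zero (fun _ => norm_nonneg _)
    (g := fun p => V * |clp T p.1 - t₀| +
      ‖∫ s in (0:ℝ)..t₀, (fld v μbar Y s p.2 - fld v μbar Y s p₀.2)‖)
  · intro p
    have hdecomp : (∫ s in (0:ℝ)..(clp T p.1), fld v μbar Y s p.2) -
        (∫ s in (0:ℝ)..t₀, fld v μbar Y s p₀.2)
        = (∫ s in t₀..(clp T p.1), fld v μbar Y s p.2) +
          ∫ s in (0:ℝ)..t₀, (fld v μbar Y s p.2 - fld v μbar Y s p₀.2) := by
      rw [intervalIntegral.integral_sub (hint p.2 0 t₀) (hint p₀.2 0 t₀),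
        ← intervalIntegral.integral_interval_sub_left (hint p.2 0 (clp T p.1))
          (hint p.2 0 t₀)]
      abel
    rw [hdecomp]
    refine (norm_add_le _ _).trans (add_le_add ?_ le_rfl)
    exact intervalIntegral.norm_integral_le_of_norm_le_const (C := V)
      (fun s _ => norm_fld_le hA h1 Y s p.2)
  · have h0t₀ : 0 ≤ t₀ := clp_nonneg T p₀.1
    haveI : IsFiniteMeasure (volume.restrict (Set.Ioc (0:ℝ) t₀)) :=
      ⟨by rw [Measure.restrict_apply_univ]; exact measure_Ioc_lt_top⟩
    have h1t : Tendsto (fun p : ℝ × Euc d => V * |clp T p.1 - t₀|) (𝓝 p₀) (𝓝 0) := by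
      have hc : Continuous fun p : ℝ × Euc d => V * |clp T p.1 - t₀| :=
        continuous_const.mul (((clp_cont T).comp continuous_fst).sub continuous_const).abs
      simpa [ht₀] using hc.tendsto p₀
    have h2t : Tendsto (fun p : ℝ × Euc d =>
        ∫ s in (0:ℝ)..t₀, (fld v μbar Y s p.2 - fld v μbar Y s p₀.2)) (𝓝 p₀) (𝓝 0) := by
      have hDCT := tendsto_integral_filter_of_dominated_convergence
        (μ := volume.restrict (Set.Ioc (0:ℝ) t₀))
        (F := fun (p : ℝ × Euc d) s => fld v μbar Y s p.2 - fld v μbar Y s p₀.2)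
        (f := fun _ => (0 : Euc d)) (bound := fun _ => V + V) (l := 𝓝 p₀)
        (by
          filter_upwards with p
          exact ((fld_cont_s hA h1 Y p.2).sub
            (fld_cont_s hA h1 Y p₀.2)).aestronglyMeasurable)
        (by
          filter_upwards with p
          filter_upwards with s
          exact (norm_sub_le _ _).trans
            (add_le_add (norm_fld_le hA h1 Y s p.2) (norm_fld_le hA h1 Y s p₀.2)))
        (integrable_const _)
        (by
          filter_upwards with s
          have hc : Continuous fun p : ℝ × Euc d =>
              fld v μbar Y s p.2 - fld v μbar Y s p₀.2 :=
            (fld_cont_x hA h1 Y s).sub continuous_const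
          simpa using hc.tendsto p₀)
      simp only [integral_zero] at hDCT
      have heq : ∀ p : ℝ × Euc d,
          (∫ s in (0:ℝ)..t₀, (fld v μbar Y s p.2 - fld v μbar Y s p₀.2))
            = ∫ s in Set.Ioc (0:ℝ) t₀, (fld v μbar Y s p.2 - fld v μbar Y s p₀.2) :=
        fun p => intervalIntegral.integral_of_le h0t₀
      simpa [heq] using hDCT
    have := h1t.add h2t.norm
    simpa using this

def Phi (hA : AssumptionA v V L) (h1 : P1 μbar) (hT : 0 < T) (Y : BCF d) : BCF d :=
  BoundedContinuousFunction.ofNormedAddCommGroup _ (Phi_cont hA h1 Y) (V * T)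
    (Phi_bound hA h1 hT Y)

lemma Phi_apply (hA : AssumptionA v V L) (h1 : P1 μbar) (hT : 0 < T) (Y : BCF d)
    (t : ℝ) (x : Euc d) :
    Phi hA h1 hT Y (t, x) = ∫ s in (0:ℝ)..(clp T t), fld v μbar Y s x := rfl

end MFG3

namespace MFG4
open MFG MFG2 MFG3

variable {d : ℕ} {v : Measure (Euc d) → Euc d → Euc d} {V L T : ℝ}
  {μbar : Measure (Euc d)}

lemma iter_est (hA : AssumptionA v V L) (h1 : P1 μbar) (hT : 0 < T) (Y Z : BCF d) :
    ∀ n : ℕ, ∀ t : ℝ, ∀ x : Euc d,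
      ‖(Phi hA h1 hT)^[n] Y (t, x) - (Phi hA h1 hT)^[n] Z (t, x)‖ ≤
        (2 * L * clp T t) ^ n / n.factorial * dist Y Z := by
  intro n
  induction n with
  | zero =>
    intro t x
    simp only [Function.iterate_zero, id_eq, pow_zero, Nat.factorial_zero, Nat.cast_one]
    rw [← dist_eq_norm]
    simpa using BoundedContinuousFunction.dist_coe_le_dist (f := Y) (g := Z) (t, x)
  | succ n ih =>
    intro t x
    set A := (Phi hA h1 hT)^[n] Y with hA'
    set B := (Phi hA h1 hT)^[n] Z with hB'
    rw [Function.iterate_succ_apply', Function.iterate_succ_apply']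
    have h0 : 0 ≤ clp T t := clp_nonneg T t
    have hLpos := hA.2.1
    have hsub : (Phi hA h1 hT A) (t, x) - (Phi hA h1 hT B) (t, x)
        = ∫ s in (0:ℝ)..(clp T t), (fld v μbar A s x - fld v μbar B s x) := by
      rw [Phi_apply, Phi_apply, ← intervalIntegral.integral_sub
        ((fld_cont_s hA h1 A x).intervalIntegrable _ _)
        ((fld_cont_s hA h1 B x).intervalIntegrable _ _)]
    rw [hsub]
    have hint1 : IntervalIntegrable (fun s => ‖fld v μbar A s x - fld v μbar B s x‖)
        volume 0 (clp T t) :=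
      ((fld_cont_s hA h1 A x).sub (fld_cont_s hA h1 B x)).norm.intervalIntegrable _ _
    have hint2 : IntervalIntegrable
        (fun s => 2 * L * ((2 * L * s) ^ n / n.factorial * dist Y Z)) volume 0 (clp T t) := by
      apply Continuous.intervalIntegrable
      continuity
    calc ‖∫ s in (0:ℝ)..(clp T t), (fld v μbar A s x - fld v μbar B s x)‖
        ≤ ∫ s in (0:ℝ)..(clp T t), ‖fld v μbar A s x - fld v μbar B s x‖ :=
          intervalIntegral.norm_integral_le_integral_norm h0
      _ ≤ ∫ s in (0:ℝ)..(clp T t),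
            2 * L * ((2 * L * s) ^ n / n.factorial * dist Y Z) := by
          apply intervalIntegral.integral_mono_on h0 hint1 hint2
          intro s hs
          have hclps : clp T s = s := clp_eq hs.1 (hs.2.trans (clp_le T hT.le t))
          have key := fld_est hA h1 A B s s x x
          simp only [add_sub_add_left_eq_sub] at key
          have ihx : ‖A (s, x) - B (s, x)‖ ≤ (2*L*s)^n / n.factorial * dist Y Z := by
            have := ih s x; rwa [hclps] at this
          have ihint : ∫ z, ‖A (s, z) - B (s, z)‖ ∂μbar ≤
              (2*L*s)^n / n.factorial * dist Y Z := by
            apply integral_le_of_forall_le h1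
            · exact ((A.continuous.comp (Continuous.prodMk_right s)).sub
                (B.continuous.comp (Continuous.prodMk_right s))).norm
            · exact fun z => norm_nonneg _
            · intro z; have := ih s z; rwa [hclps] at this
          refine key.trans ?_
          have hsum := add_le_add ihx ihint
          calc L * (‖A (s, x) - B (s, x)‖ + ∫ z, ‖A (s, z) - B (s, z)‖ ∂μbar)
              ≤ L * ((2*L*s)^n / n.factorial * dist Y Z +
                  (2*L*s)^n / n.factorial * dist Y Z) :=
                mul_le_mul_of_nonneg_left hsum hLpos.le
            _ = 2 * L * ((2 * L * s) ^ n / n.factorial * dist Y Z) := by ring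
      _ = (2 * L * clp T t) ^ (n+1) / (n+1).factorial * dist Y Z := by
          have heq : ∀ s : ℝ, 2 * L * ((2 * L * s) ^ n / n.factorial * dist Y Z)
              = ((2*L)^(n+1) / n.factorial * dist Y Z) * s ^ n := by
            intro s; rw [mul_pow]; ring
          rw [intervalIntegral.integral_congr (g :=
            fun s => ((2*L)^(n+1) / n.factorial * dist Y Z) * s ^ n)
            (fun s _ => heq s)]
          rw [intervalIntegral.integral_const_mul, integral_pow]
          have hfac : ((n+1).factorial : ℝ) = (n+1) * n.factorial := by
            rw [Nat.factorial_succ]; push_cast; ring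
          have hne : (n.factorial : ℝ) ≠ 0 := by
            exact_mod_cast Nat.factorial_ne_zero n
          have hne2 : ((n:ℝ)+1) ≠ 0 := by positivity
          rw [hfac, mul_pow]
          field_simp
          ring

lemma exists_fixed (hA : AssumptionA v V L) (h1 : P1 μbar) (hT : 0 < T) :
    ∃ Y : BCF d, Phi hA h1 hT Y = Y := by
  have hLT : 0 < 2 * L * T := by have := hA.2.1; positivity
  obtain ⟨m, hm⟩ : ∃ m : ℕ, (2*L*T)^m / m.factorial < 1 :=
    ((FloorSemiring.tendsto_pow_div_factorial_atTop (2*L*T)).eventually_lt_const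
      one_pos).exists
  set q := (2*L*T)^m / m.factorial with hq
  have hq0 : 0 ≤ q := by positivity
  set F := Phi hA h1 hT with hF
  have hcontr : ContractingWith q.toNNReal (F^[m]) := by
    constructor
    · rw [← NNReal.coe_lt_coe, Real.coe_toNNReal q hq0, NNReal.coe_one]
      exact hm
    · apply LipschitzWith.of_dist_le_mul
      intro Y Z
      rw [Real.coe_toNNReal q hq0,
        BoundedContinuousFunction.dist_le (by positivity)]
      intro p
      rw [dist_eq_norm]
      have hest := iter_est hA h1 hT Y Z m p.1 p.2
      refine le_trans (by simpa using hest) ?_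
      have hclpn := clp_nonneg T p.1
      have hclpl := clp_le T hT.le p.1
      have h2L : (0:ℝ) ≤ 2 * L := by have := hA.2.1; positivity
      have hb : (2*L*clp T p.1)^m / m.factorial ≤ q := by
        rw [hq]
        have hpow : (2*L*clp T p.1)^m ≤ (2*L*T)^m :=
          pow_le_pow_left₀ (by positivity) (mul_le_mul_of_nonneg_left hclpl h2L) m
        gcongr
      exact mul_le_mul_of_nonneg_right hb dist_nonneg
  haveI : Nonempty (BCF d) := ⟨0⟩
  set Y := ContractingWith.fixedPoint (F^[m]) hcontr with hY
  have hfix : Function.IsFixedPt (F^[m]) Y := hcontr.fixedPoint_isFixedPt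
  have hfix2 : Function.IsFixedPt (F^[m]) (F Y) := by
    show F^[m] (F Y) = F Y
    rw [← Function.iterate_succ_apply, Function.iterate_succ_apply', hfix]
  refine ⟨Y, ?_⟩
  have e1 := hcontr.fixedPoint_unique hfix2
  have e2 := hcontr.fixedPoint_unique hfix
  rw [e1, ← e2]

end MFG4

namespace MFG5
open MFG MFG2 MFG3 MFG4

variable {d : ℕ} {v : Measure (Euc d) → Euc d → Euc d} {V L T : ℝ}
  {μbar : Measure (Euc d)}

lemma v_cont (hA : AssumptionA v V L) {m : Measure (Euc d)} (hm : P1 m) :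
    Continuous (v m) := by
  have hlip : LipschitzWith (Real.toNNReal L) (v m) := by
    apply LipschitzWith.of_dist_le_mul
    intro x y
    rw [dist_eq_norm, dist_eq_norm, Real.coe_toNNReal L hA.2.1.le]
    have h := hA.2.2.2.1 m m hm hm y x
    rwa [W1_self, add_zero] at h
  exact hlip.continuous

theorem existence
    (hA : AssumptionA v V L) (hT : 0 < T) (h1 : P1 μbar) :
    ∃ μ : ℝ → Measure (Euc d), μ 0 = μbar ∧ IsWeakSolution v T μbar μ := by
  classical
  haveI hPM := h1.1
  obtain ⟨Y, hYfix⟩ := MFG4.exists_fixed hA h1 hT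
  have hYeq : ∀ t x, Y (t, x) = ∫ s in (0:ℝ)..(clp T t), fld v μbar Y s x := by
    intro t x
    conv_lhs => rw [← hYfix]
    exact Phi_apply hA h1 hT Y t x
  have hVpos := hA.1
  have hLpos := hA.2.1
  set μ : ℝ → Measure (Euc d) := fun t => mMeas μbar Y (clp T t) with hμ
  have hμt : ∀ t ∈ Set.Icc (0:ℝ) T, μ t = μbar.map (fun z => z + Y (t, z)) := by
    intro t ht
    simp only [hμ]
    rw [clp_eq ht.1 ht.2]
    rfl
  have hP1 : ∀ t, P1 (μ t) := fun t => P1_mMeas h1 Y (clp T t)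
  have hYdiff : ∀ s t : ℝ, 0 ≤ s → s ≤ T → 0 ≤ t → t ≤ T → ∀ z : Euc d,
      ‖Y (t, z) - Y (s, z)‖ ≤ V * |s - t| := by
    intro s t hs0 hsT ht0 htT z
    rw [hYeq t z, hYeq s z, clp_eq ht0 htT, clp_eq hs0 hsT,
      intervalIntegral.integral_interval_sub_left
        ((fld_cont_s hA h1 Y z).intervalIntegrable _ _)
        ((fld_cont_s hA h1 Y z).intervalIntegrable _ _)]
    have h := intervalIntegral.norm_integral_le_of_norm_le_const (C := V)
      (f := fun τ => fld v μbar Y τ z) (a := s) (b := t)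
      (fun τ _ => norm_fld_le hA h1 Y τ z)
    rwa [abs_sub_comm] at h
  have hW1 : ∀ s ∈ Set.Icc (0:ℝ) T, ∀ t ∈ Set.Icc (0:ℝ) T,
      W1 (μ s) (μ t) ≤ V * |s - t| := by
    intro s hs t ht
    rw [hμt s hs, hμt t ht]
    have hle := W1_map_le h1 (cont_addY Y s) (cont_addY Y t) (C := ‖Y‖)
      (bound_addY Y s) (bound_addY Y t) (D := ‖Y‖ + ‖Y‖)
      (fun z => by
        simp only [add_sub_add_left_eq_sub]
        exact (norm_sub_le _ _).trans
          (add_le_add (Y.norm_coe_le_norm _) (Y.norm_coe_le_norm _)))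
    refine hle.trans ?_
    apply integral_le_of_forall_le h1
    · exact ((cont_addY Y t).sub (cont_addY Y s)).norm
    · exact fun z => norm_nonneg _
    · intro z
      simp only [add_sub_add_left_eq_sub]
      exact hYdiff s t hs.1 hs.2 ht.1 ht.2 z
  refine ⟨μ, ?_, ?_, ?_, ?_⟩
  · -- μ 0 = μbar
    have hY0 : ∀ z : Euc d, Y (0, z) = 0 := fun z => by
      rw [hYeq 0 z, clp_eq le_rfl hT.le, intervalIntegral.integral_same]
    simp only [hμ]
    rw [clp_eq le_rfl hT.le]
    show μbar.map (fun z => z + Y (0, z)) = μbar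
    have hid : (fun z : Euc d => z + Y (0, z)) = id := funext fun z => by
      rw [hY0 z, add_zero]; rfl
    rw [hid, Measure.map_id]
  · exact fun t _ => hP1 t
  · -- W1 continuity
    intro t ht ε hε
    refine ⟨ε / V, div_pos hε hVpos, fun s hs hst => ?_⟩
    refine lt_of_le_of_lt (hW1 s hs t ht) ?_
    have h2 : V * |s - t| < V * (ε / V) := mul_lt_mul_of_pos_left hst hVpos
    have h3 : V * (ε / V) = ε := by field_simp
    linarith
  · -- PDE
    intro φ hφ hφc t ht
    have ht0 : (0:ℝ) ≤ t := ht.1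
    have hφcont := hφ.continuous
    obtain ⟨Cφ, hCφ⟩ := hφcont.bounded_above_of_compact_support hφc
    have hgradeq : ∀ (x y : Euc d), (inner ℝ (gradient φ x) y : ℝ) = fderiv ℝ φ x y :=
      fun x y => by rw [gradient]; exact InnerProductSpace.toDual_symm_apply
    have hgradc : Continuous (gradient φ) := by
      have h := hφ.continuous_fderiv (by simp)
      have he : (gradient φ) = fun x => (InnerProductSpace.toDual ℝ _).symm (fderiv ℝ φ x) := by
        funext x; rw [gradient]
      rw [he]
      exact (LinearIsometryEquiv.continuous _).comp h
    obtain ⟨Cg, hCg⟩ := (hφ.continuous_fderiv (by simp)).bounded_above_of_compact_support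
      (HasCompactSupport.fderiv ℝ hφc)
    have hCg' : ∀ x, ‖gradient φ x‖ ≤ Cg := by
      intro x
      have he : ‖gradient φ x‖ = ‖fderiv ℝ φ x‖ := by
        rw [gradient]; exact LinearIsometryEquiv.norm_map _ _
      rw [he]; exact hCg x
    set G : ℝ → Euc d → ℝ := fun s z =>
      (inner ℝ (fld v μbar Y s z) (gradient φ (z + Y (s, z))) : ℝ) with hG
    have stepA : ∀ z : Euc d, φ (z + Y (t, z)) - φ z = ∫ s in (0:ℝ)..t, G s z := by
      intro z
      set w : ℝ → Euc d := fun s => ∫ τ in (0:ℝ)..s, fld v μbar Y τ z with hw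
      have hwder : ∀ s : ℝ, HasDerivAt w (fld v μbar Y s z) s := fun s =>
        intervalIntegral.integral_hasDerivAt_right
          ((fld_cont_s hA h1 Y z).intervalIntegrable _ _)
          ((fld_cont_s hA h1 Y z).stronglyMeasurableAtFilter _ _)
          (fld_cont_s hA h1 Y z).continuousAt
      have hwc : Continuous w := by
        rw [continuous_iff_continuousAt]
        exact fun s => (hwder s).continuousAt
      have hder2 : ∀ s : ℝ, HasDerivAt (fun s => φ (z + w s))
          ((inner ℝ (gradient φ (z + w s)) (fld v μbar Y s z) : ℝ)) s := by
        intro s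
        have h1d : HasDerivAt (fun s => z + w s) (fld v μbar Y s z) s :=
          (hwder s).const_add z
        have h2d := (hφ.differentiable (by simp) (z + w s)).hasFDerivAt.comp_hasDerivAt s h1d
        rw [hgradeq]
        exact h2d
      have hintd : IntervalIntegrable
          (fun s => (inner ℝ (gradient φ (z + w s)) (fld v μbar Y s z) : ℝ)) volume 0 t :=
        (Continuous.inner (hgradc.comp (continuous_const.add hwc))
          (fld_cont_s hA h1 Y z)).intervalIntegrable _ _
      have hFTC := intervalIntegral.integral_eq_sub_of_hasDerivAt
        (fun s _ => hder2 s) hintd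
      have hw0 : w 0 = 0 := intervalIntegral.integral_same
      have hwt : w t = Y (t, z) := by
        rw [hw]; simp only
        rw [hYeq t z, clp_eq ht.1 ht.2]
      rw [hw0, add_zero, hwt] at hFTC
      rw [← hFTC]
      apply intervalIntegral.integral_congr
      intro s hs
      rw [Set.uIcc_of_le ht0] at hs
      have hws : w s = Y (s, z) := by
        rw [hw]; simp only
        rw [hYeq s z, clp_eq hs.1 (hs.2.trans ht.2)]
      simp only [hG]
      rw [hws, real_inner_comm]
    -- Step B
    rw [hμt t ht, integral_map (cont_addY Y t).aemeasurable hφcont.aestronglyMeasurable]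
    have e1 : Integrable (fun z : Euc d => φ z) μbar :=
      (integrable_const Cφ).mono' hφcont.aestronglyMeasurable
        (by filter_upwards with z; exact hCφ z)
    have e3 : Integrable (fun z : Euc d => φ (z + Y (t, z))) μbar :=
      (integrable_const Cφ).mono' (hφcont.comp (cont_addY Y t)).aestronglyMeasurable
        (by filter_upwards with z; exact hCφ _)
    have e2 : Integrable (fun z : Euc d => φ (z + Y (t, z)) - φ z) μbar := e3.sub e1
    have hsplit := integral_add e1 e2
    simp only [show ∀ a b : ℝ, a + (b - a) = b from fun a b => by ring] at hsplit
    rw [hsplit]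
    congr 1
    haveI hfin : IsFiniteMeasure (volume.restrict (Set.Ioc (0:ℝ) t)) :=
      ⟨by rw [Measure.restrict_apply_univ]; exact measure_Ioc_lt_top⟩
    have hGcont : Continuous fun p : Euc d × ℝ => G p.2 p.1 := by
      apply Continuous.inner
      · exact (fld_cont hA h1 Y).comp (continuous_snd.prodMk continuous_fst)
      · exact hgradc.comp (continuous_fst.add
          (Y.continuous.comp (continuous_snd.prodMk continuous_fst)))
    have hGint : Integrable (Function.uncurry fun (z : Euc d) (s : ℝ) => G s z)
        (μbar.prod (volume.restrict (Set.Ioc (0:ℝ) t))) := by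
      refine (integrable_const (V * Cg)).mono' ?_ ?_
      · exact hGcont.aestronglyMeasurable
      · filter_upwards with p
        calc ‖G p.2 p.1‖
            ≤ ‖fld v μbar Y p.2 p.1‖ * ‖gradient φ (p.1 + Y (p.2, p.1))‖ :=
              norm_inner_le_norm _ _
          _ ≤ V * Cg := mul_le_mul (norm_fld_le hA h1 Y _ _) (hCg' _)
              (norm_nonneg _) hVpos.le
    have hswap := MeasureTheory.integral_integral_swap hGint
    calc ∫ z, (φ (z + Y (t, z)) - φ z) ∂μbar
        = ∫ z, (∫ s in Set.Ioc (0:ℝ) t, G s z) ∂μbar := by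
          apply integral_congr_ae
          filter_upwards with z
          rw [stepA z, intervalIntegral.integral_of_le ht0]
      _ = ∫ s in Set.Ioc (0:ℝ) t, (∫ z, G s z ∂μbar) := hswap
      _ = ∫ s in Set.Ioc (0:ℝ) t,
            ∫ x, (inner ℝ (v (μ s) x) (gradient φ x) : ℝ) ∂(μ s) := by
          apply setIntegral_congr_fun measurableSet_Ioc
          intro s hs
          have hsIcc : s ∈ Set.Icc (0:ℝ) T := ⟨hs.1.le, hs.2.trans ht.2⟩
          show ∫ z, G s z ∂μbar = ∫ x, (inner ℝ (v (μ s) x) (gradient φ x) : ℝ) ∂(μ s)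
          rw [hμt s hsIcc,
            integral_map (cont_addY Y s).aemeasurable
              (Continuous.aestronglyMeasurable
                (Continuous.inner (v_cont hA (hμt s hsIcc ▸ hP1 s)) hgradc))]
          rfl
      _ = ∫ τ in (0:ℝ)..t, ∫ x, (inner ℝ (v (μ τ) x) (gradient φ x) : ℝ) ∂(μ τ) :=
          (intervalIntegral.integral_of_le ht0).symm

end MFG5

/-- Existence, Theorem 1 of the paper.
Under Assumption A on the velocity field and for any initial datum
`μ̄ ∈ P₁(ℝ^d) ∩ P₂(ℝ^d)`, there exists a weak solution `μ : [0,T] → P₁(ℝ^d)`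
(continuous w.r.t. `W₁`) of the Cauchy problem
`∂ₜ μ_t + ∇·(μ_t v[μ_t]) = 0` in `ℝ^d × (0,T]`, `μ₀ = μ̄`. -/
theorem existence_of_weak_solutions
    (d : ℕ) (hd : 1 ≤ d)
    (v : Measure (Euc d) → Euc d → Euc d) (V L : ℝ)
    (hA : AssumptionA v V L)
    (T : ℝ) (hT : 0 < T)
    (μbar : Measure (Euc d)) (hμbar : P1 μbar ∧ P2 μbar) :
    ∃ μ : ℝ → Measure (Euc d), μ 0 = μbar ∧ IsWeakSolution v T μbar μ :=
  MFG5.existence hA hT hμbar.1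

end
end

section
/- For the semi-discrete scheme, the time-interpolated curves M^k satisfy W₁(M_s^k, M_t^k) ≤ V|t−s| for all s, t ∈ [0,T] and all k ≥ 0 (uniform Lipschitz continuity in k); moreover sup_{k≥0} sup_{t∈[0,T]} ∫|x|^p dM_t^k(x) < +∞ for p = 1 and p = 2; explicitly, ∫|x| dM_t^k ≤ ∫|x| dμ̄ + VT and ∫|x|² dM_t^k ≤ ∫|x|² dμ̄ + 2VT∫|x| dμ̄ + 3V²T². -/
open MeasureTheory Metric Filter

noncomputable section

noncomputable def plin (a : ℕ → ℝ) (u : ℝ) : ℝ :=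
  a ⌊u⌋₊ + (u - ⌊u⌋₊) * (a (⌊u⌋₊ + 1) - a ⌊u⌋₊)

lemma plin_nat (a : ℕ → ℝ) (n : ℕ) : plin a n = a n := by
  simp [plin]

lemma plin_lip_nat (a : ℕ → ℝ) (c : ℝ) (hc : 0 ≤ c)
    (h : ∀ n, |a (n + 1) - a n| ≤ c) :
    ∀ n : ℕ, ∀ u : ℝ, 0 ≤ u → u ≤ n → |a n - plin a u| ≤ c * (n - u) := by
  intro n
  induction n with
  | zero =>
    intro u hu hun
    have : u = 0 := le_antisymm (by exact_mod_cast hun) hu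
    subst this
    simp [plin]
  | succ n ih =>
    intro u hu hun
    rcases eq_or_lt_of_le hun with heq | hlt
    · rw [heq, plin_nat]
      simp [← heq]
    · rcases le_or_gt (n : ℝ) u with h1 | h2
      · -- floor u = n
        have hfl : ⌊u⌋₊ = n := by
          rw [Nat.floor_eq_iff hu]
          constructor
          · exact_mod_cast h1
          · exact_mod_cast hlt
        have : a (n+1) - plin a u = (1 - (u - n)) * (a (n+1) - a n) := by
          simp [plin, hfl]; ring
        rw [this, abs_mul]
        have h01 : 0 ≤ 1 - (u - (n:ℝ)) := by
          have := hlt; push_cast at this ⊢; linarith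
        rw [abs_of_nonneg h01]
        calc (1 - (u - (n:ℝ))) * |a (n+1) - a n| ≤ (1 - (u - n)) * c :=
              mul_le_mul_of_nonneg_left (h n) h01
          _ = c * ((n+1 : ℕ) - u) := by push_cast; ring
      · -- u < n
        have key := ih u hu (le_of_lt h2)
        calc |a (n+1) - plin a u| ≤ |a (n+1) - a n| + |a n - plin a u| := by
              have := abs_sub_le (a (n+1)) (a n) (plin a u); linarith
          _ ≤ c + c * (n - u) := add_le_add (h n) key
          _ ≤ c * ((n+1:ℕ) - u) := by push_cast; nlinarith

lemma plin_lip (a : ℕ → ℝ) (c : ℝ) (hc : 0 ≤ c)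
    (h : ∀ n, |a (n + 1) - a n| ≤ c) :
    ∀ u w : ℝ, 0 ≤ u → u ≤ w → |plin a w - plin a u| ≤ c * (w - u) := by
  intro u w hu huw
  have hw : 0 ≤ w := le_trans hu huw
  set n := ⌊w⌋₊ with hn
  have hnw : (n : ℝ) ≤ w := Nat.floor_le hw
  by_cases hcase : ⌊u⌋₊ = n
  · -- same cell
    have : plin a w - plin a u = (w - u) * (a (n+1) - a n) := by
      simp only [plin, ← hn, hcase]; ring
    rw [this, abs_mul, abs_of_nonneg (by linarith : (0:ℝ) ≤ w - u)]
    calc (w - u) * |a (n+1) - a n| ≤ (w - u) * c :=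
          mul_le_mul_of_nonneg_left (h n) (by linarith)
      _ = c * (w - u) := by ring
  · have hlt : ⌊u⌋₊ < n := by
      have : ⌊u⌋₊ ≤ n := Nat.floor_le_floor huw
      omega
    have hun : u < n := by
      have h1 : u < ⌊u⌋₊ + 1 := Nat.lt_floor_add_one u
      have h2 : (⌊u⌋₊ : ℝ) + 1 ≤ n := by exact_mod_cast hlt
      linarith
    have key := plin_lip_nat a c hc h n u hu (le_of_lt hun)
    have hwn : plin a w - a n = (w - n) * (a (n+1) - a n) := by
      simp only [plin, ← hn]; ring
    calc |plin a w - plin a u| ≤ |plin a w - a n| + |a n - plin a u| := by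
          have := abs_sub_le (plin a w) (a n) (plin a u); linarith
      _ ≤ c * (w - n) + c * (n - u) := by
          refine add_le_add ?_ key
          rw [hwn, abs_mul, abs_of_nonneg (by linarith : (0:ℝ) ≤ w - n)]
          have := mul_le_mul_of_nonneg_left (h n) (by linarith : (0:ℝ) ≤ w - n)
          linarith
      _ = c * (w - u) := by ring

lemma plin_def (a : ℕ → ℝ) (u : ℝ) : plin a u =
    a ⌊u⌋₊ + (u - ⌊u⌋₊) * (a (⌊u⌋₊ + 1) - a ⌊u⌋₊) := rfl

lemma lip_int {d : ℕ} {μ : Measure (Euc d)} (h : P1 μ) {φ : Euc d → ℝ}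
    (hφ : LipschitzWith 1 φ) : Integrable φ μ := by
  have : IsProbabilityMeasure μ := h.1
  refine Integrable.mono' (g := fun x => |φ 0| + ‖x‖)
    ((integrable_const _).add h.2) hφ.continuous.aestronglyMeasurable ?_
  filter_upwards with x
  have := hφ.dist_le_mul x 0
  rw [Real.norm_eq_abs]
  simp only [NNReal.coe_one, one_mul] at this
  have h0 : dist (φ x) (φ 0) ≤ dist x 0 := this
  rw [Real.dist_eq] at h0
  have : dist x 0 = ‖x‖ := by simp [dist_eq_norm]
  rw [this] at h0
  cases abs_sub_le_iff.mp h0 with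
  | intro h1 h2 => cases abs_le.mp (abs_abs_sub_abs_le_abs_sub (φ x) (φ 0)) with
    | intro _ _ => cases abs_cases (φ x) with
      | inl hc => linarith [abs_nonneg (φ 0), (abs_le.mpr ⟨by linarith, by linarith⟩ : |φ x - φ 0| ≤ ‖x‖)]
      | inr hc => linarith


lemma sd_props {d : ℕ} (v : Measure (Euc d) → Euc d → Euc d) (V : ℝ) (hV : 0 < V)
    (hbound : ∀ μ, P1 μ → ∀ x, ‖v μ x‖ ≤ V)
    (hmeas : ∀ μ, Measurable (v μ))
    (μbar : Measure (Euc d)) (h1 : P1 μbar) (h2 : Integrable (fun x => ‖x‖ ^ 2) μbar)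
    (δ : ℝ) (hδ : 0 < δ) :
    ∀ n : ℕ, P1 (sdScheme v μbar δ n) ∧ Integrable (fun x => ‖x‖ ^ 2) (sdScheme v μbar δ n) ∧
      (∫ x, ‖x‖ ∂(sdScheme v μbar δ n)) ≤ (∫ x, ‖x‖ ∂μbar) + V * (n * δ) ∧
      (∫ x, ‖x‖ ^ 2 ∂(sdScheme v μbar δ n)) ≤
        (∫ x, ‖x‖ ^ 2 ∂μbar) + 2 * V * (∫ x, ‖x‖ ∂μbar) * (n * δ) + V ^ 2 * (n * δ) ^ 2 := by
  intro n
  induction n with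
  | zero => exact ⟨h1, h2, by simp [sdScheme], by simp [sdScheme]⟩
  | succ n ih =>
    obtain ⟨hP1, hI2, hA, hB⟩ := ih
    set μ := sdScheme v μbar δ n with hμ
    have hprob : IsProbabilityMeasure μ := hP1.1
    set f : Euc d → Euc d := fun x => x + δ • v μ x with hf
    have hfm : Measurable f := measurable_id.add ((hmeas μ).const_smul δ)
    have hnorm : ∀ x, ‖f x‖ ≤ ‖x‖ + δ * V := by
      intro x
      calc ‖f x‖ ≤ ‖x‖ + ‖δ • v μ x‖ := norm_add_le _ _
        _ ≤ ‖x‖ + δ * V := by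
            rw [norm_smul, Real.norm_eq_abs, abs_of_pos hδ]
            exact add_le_add (le_refl _) (mul_le_mul_of_nonneg_left (hbound μ hP1 x) hδ.le)
    have hmap : sdScheme v μbar δ (n+1) = μ.map f := rfl
    have hprob' : IsProbabilityMeasure (μ.map f) := Measure.isProbabilityMeasure_map hfm.aemeasurable
    -- first moment integrability
    have hint1 : Integrable (fun x => ‖f x‖) μ := by
      refine Integrable.mono' (g := fun x => ‖x‖ + δ * V) (hP1.2.add (integrable_const _))
        (hfm.norm.aestronglyMeasurable) ?_
      filter_upwards with x
      rw [Real.norm_eq_abs, abs_of_nonneg (norm_nonneg _)]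
      exact hnorm x
    have hI1' : Integrable (fun x => ‖x‖) (μ.map f) := by
      rw [integrable_map_measure continuous_norm.aestronglyMeasurable hfm.aemeasurable]
      exact hint1
    -- second moment integrability
    have hsq : ∀ x, ‖f x‖ ^ 2 ≤ ‖x‖ ^ 2 + 2 * (δ * V) * ‖x‖ + (δ * V) ^ 2 := by
      intro x
      have h := mul_le_mul (hnorm x) (hnorm x) (norm_nonneg _)
        (by positivity : (0:ℝ) ≤ ‖x‖ + δ * V)
      nlinarith [h]
    have ig : Integrable (fun x : Euc d => ‖x‖ ^ 2 + 2 * (δ * V) * ‖x‖) μ :=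
      hI2.add (hP1.2.const_mul _)
    have ig' : Integrable (fun x : Euc d => ‖x‖ ^ 2 + 2 * (δ * V) * ‖x‖ + (δ * V) ^ 2) μ :=
      ig.add (integrable_const _)
    have hint2 : Integrable (fun x => ‖f x‖ ^ 2) μ := by
      refine Integrable.mono' ig' ((hfm.norm.pow_const 2).aestronglyMeasurable) ?_
      filter_upwards with x
      rw [Real.norm_eq_abs, abs_of_nonneg (by positivity)]
      exact hsq x
    have hI2' : Integrable (fun x => ‖x‖ ^ 2) (μ.map f) := by
      rw [integrable_map_measure (g := fun x : Euc d => ‖x‖ ^ 2) (continuous_norm.pow 2).aestronglyMeasurable hfm.aemeasurable]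
      exact hint2
    -- integrals
    have hconst : ∀ c : ℝ, ∫ _x, c ∂μ = c := fun c => by simp
    have hieq1 : ∫ x, ‖x‖ ∂(μ.map f) = ∫ x, ‖f x‖ ∂μ :=
      integral_map hfm.aemeasurable continuous_norm.aestronglyMeasurable
    have hieq2 : ∫ x, ‖x‖ ^ 2 ∂(μ.map f) = ∫ x, ‖f x‖ ^ 2 ∂μ :=
      integral_map hfm.aemeasurable (continuous_norm.pow 2).aestronglyMeasurable
    have hm1 : ∫ x, ‖f x‖ ∂μ ≤ (∫ x, ‖x‖ ∂μ) + δ * V := by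
      calc ∫ x, ‖f x‖ ∂μ ≤ ∫ x, (‖x‖ + δ * V) ∂μ :=
            integral_mono hint1 (hP1.2.add (integrable_const _)) hnorm
        _ = (∫ x, ‖x‖ ∂μ) + δ * V := by
            rw [integral_add hP1.2 (integrable_const _)]; simp
    have hm2 : ∫ x, ‖f x‖ ^ 2 ∂μ ≤ (∫ x, ‖x‖ ^ 2 ∂μ) + 2 * (δ * V) * (∫ x, ‖x‖ ∂μ) + (δ * V) ^ 2 := by
      calc ∫ x, ‖f x‖ ^ 2 ∂μ ≤ ∫ x, (‖x‖ ^ 2 + 2 * (δ * V) * ‖x‖ + (δ * V) ^ 2) ∂μ :=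
            integral_mono hint2 ig' hsq
        _ = (∫ x, ‖x‖ ^ 2 ∂μ) + 2 * (δ * V) * (∫ x, ‖x‖ ∂μ) + (δ * V) ^ 2 := by
            rw [integral_add ig (integrable_const _),
              integral_add hI2 (hP1.2.const_mul _), integral_const_mul]
            simp
    refine ⟨⟨hprob', by rw [hmap]; exact hI1'⟩, by rw [hmap]; exact hI2', ?_, ?_⟩
    · rw [hmap, hieq1]
      push_cast
      have : V * ((↑n + 1) * δ) = V * (↑n * δ) + δ * V := by ring
      rw [this]
      linarith
    · rw [hmap, hieq2]
      have hC1 : 0 ≤ ∫ x, ‖x‖ ∂μbar := integral_nonneg fun x => norm_nonneg x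
      have hμ1 : 0 ≤ ∫ x, ‖x‖ ∂μ := integral_nonneg fun x => norm_nonneg x
      push_cast
      nlinarith [hA, hB, hm2, hμ1, hC1, mul_pos hδ hV, sq_nonneg ((n:ℝ) * δ)]

lemma step_est {d : ℕ} (v : Measure (Euc d) → Euc d → Euc d) (V : ℝ) (hV : 0 < V)
    (hbound : ∀ μ, P1 μ → ∀ x, ‖v μ x‖ ≤ V)
    (hmeas : ∀ μ, Measurable (v μ))
    (μ : Measure (Euc d)) (hP1 : P1 μ) (δ : ℝ) (hδ : 0 < δ)
    {φ : Euc d → ℝ} (hφ : LipschitzWith 1 φ)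
    (hφint : Integrable φ μ) (hφint' : Integrable φ (flowStep v δ μ)) :
    |(∫ x, φ x ∂(flowStep v δ μ)) - ∫ x, φ x ∂μ| ≤ V * δ := by
  have hprob : IsProbabilityMeasure μ := hP1.1
  set f : Euc d → Euc d := fun x => x + δ • v μ x with hf
  have hfm : Measurable f := measurable_id.add ((hmeas μ).const_smul δ)
  have hieq : ∫ x, φ x ∂(flowStep v δ μ) = ∫ x, φ (f x) ∂μ :=
    integral_map hfm.aemeasurable hφ.continuous.aestronglyMeasurable
  have hφf : Integrable (fun x => φ (f x)) μ := by
    have := hφint'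
    rw [flowStep, integrable_map_measure hφ.continuous.aestronglyMeasurable hfm.aemeasurable]
      at this
    exact this
  have hptwise : ∀ x, |φ (f x) - φ x| ≤ V * δ := by
    intro x
    have h0 : dist (φ (f x)) (φ x) ≤ dist (f x) x := by
      simpa using hφ.dist_le_mul (f x) x
    rw [Real.dist_eq] at h0
    have : dist (f x) x = ‖δ • v μ x‖ := by
      rw [dist_eq_norm]; simp [hf]
    rw [this, norm_smul, Real.norm_eq_abs, abs_of_pos hδ] at h0
    calc |φ (f x) - φ x| ≤ δ * ‖v μ x‖ := h0
      _ ≤ δ * V := mul_le_mul_of_nonneg_left (hbound μ hP1 x) hδ.le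
      _ = V * δ := mul_comm δ V
  rw [hieq, ← integral_sub hφf hφint]
  calc |∫ x, (φ (f x) - φ x) ∂μ| ≤ ∫ x, |φ (f x) - φ x| ∂μ := by
        simpa [Real.norm_eq_abs] using norm_integral_le_integral_norm (fun x => φ (f x) - φ x) (μ := μ)
    _ ≤ ∫ _x, V * δ ∂μ := integral_mono (hφf.sub hφint).abs (integrable_const _) hptwise
    _ = V * δ := by simp

lemma interp_integral {d : ℕ} (μseq : ℕ → Measure (Euc d)) (δ t : ℝ) (hδ : 0 < δ)
    (ht : 0 ≤ t) (f : Euc d → ℝ)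
    (h1 : Integrable f (μseq ⌊t / δ⌋₊)) (h2 : Integrable f (μseq (⌊t / δ⌋₊ + 1))) :
    ∫ x, f x ∂(interp μseq δ t) =
      (1 - (t - ⌊t / δ⌋₊ * δ) / δ) * (∫ x, f x ∂(μseq ⌊t / δ⌋₊)) +
        ((t - ⌊t / δ⌋₊ * δ) / δ) * (∫ x, f x ∂(μseq (⌊t / δ⌋₊ + 1))) := by
  set n := ⌊t / δ⌋₊ with hn
  set θ := (t - n * δ) / δ with hθ
  have hθ0 : 0 ≤ θ := by
    apply div_nonneg _ hδ.le
    have : (n : ℝ) ≤ t / δ := Nat.floor_le (div_nonneg ht hδ.le)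
    have := (mul_le_mul_of_nonneg_right this hδ.le)
    rw [div_mul_cancel₀ _ hδ.ne'] at this
    linarith
  have hθ1 : θ ≤ 1 := by
    rw [hθ, div_le_one hδ]
    have : t / δ < n + 1 := Nat.lt_floor_add_one (t / δ)
    have := (mul_lt_mul_of_pos_right this hδ)
    rw [div_mul_cancel₀ _ hδ.ne'] at this
    nlinarith
  have hne : ∀ c : ℝ, ENNReal.ofReal c ≠ ⊤ := fun c => ENNReal.ofReal_ne_top
  rw [interp, ← hn, ← hθ]
  rw [integral_add_measure (h1.smul_measure (hne _)) (h2.smul_measure (hne _)),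
    integral_smul_measure, integral_smul_measure,
    ENNReal.toReal_ofReal (by linarith), ENNReal.toReal_ofReal hθ0]
  simp [smul_eq_mul]

/-- Lemma 2 of the paper.
The time-interpolated curves `M^k` of the semi-discrete scheme satisfy
`W₁(M_s^k, M_t^k) ≤ V|t−s|` for all `s, t ∈ [0,T]` and all `k` (uniform Lipschitz
continuity), with explicit uniformly bounded first and second moments:
`∫‖x‖ dM_t^k ≤ ∫‖x‖ dμ̄ + V T` and
`∫‖x‖² dM_t^k ≤ ∫‖x‖² dμ̄ + 2 V T ∫‖x‖ dμ̄ + 3 V² T²`. -/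
theorem interpolated_curves_lipschitz_and_moments
    (d : ℕ) (hd : 1 ≤ d)
    (v : Measure (Euc d) → Euc d → Euc d) (V : ℝ) (hV : 0 < V)
    (hbound : ∀ μ, P1 μ → ∀ x, ‖v μ x‖ ≤ V)
    (hmeas : ∀ μ, Measurable (v μ))
    (T : ℝ) (hT : 0 < T)
    (μbar : Measure (Euc d)) (hμbar : P1 μbar ∧ P2 μbar)
    (Δt : ℕ → ℝ) (N : ℕ → ℕ)
    (hΔtpos : ∀ k, 0 < Δt k) (hNT : ∀ k, (N k : ℝ) * Δt k = T) :
    ∀ k : ℕ,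
      (∀ s ∈ Set.Icc (0:ℝ) T, ∀ t ∈ Set.Icc (0:ℝ) T,
        W1 (interp (sdScheme v μbar (Δt k)) (Δt k) s)
           (interp (sdScheme v μbar (Δt k)) (Δt k) t) ≤ V * |t - s|) ∧
      (∀ t ∈ Set.Icc (0:ℝ) T,
        (∫ x, ‖x‖ ∂(interp (sdScheme v μbar (Δt k)) (Δt k) t)) ≤
          (∫ x, ‖x‖ ∂μbar) + V * T ∧
        (∫ x, ‖x‖ ^ 2 ∂(interp (sdScheme v μbar (Δt k)) (Δt k) t)) ≤
          (∫ x, ‖x‖ ^ 2 ∂μbar) + 2 * V * T * (∫ x, ‖x‖ ∂μbar) + 3 * V ^ 2 * T ^ 2) := by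
  intro k
  set δ := Δt k with hδdef
  have hδ : 0 < δ := hΔtpos k
  have hδT : δ ≤ T := by
    have hN : 1 ≤ N k := by
      by_contra h
      push_neg at h
      interval_cases hNk : N k
      · have := hNT k; rw [hNk] at this; simp at this; linarith
    have : (1 : ℝ) * δ ≤ (N k : ℝ) * δ := by
      apply mul_le_mul_of_nonneg_right _ hδ.le
      exact_mod_cast hN
    rw [one_mul, hNT k] at this
    exact this
  set sd := sdScheme v μbar δ with hsd
  have props := sd_props v V hV hbound hmeas μbar hμbar.1 hμbar.2.2 δ hδ
  have hC1 : 0 ≤ ∫ x, ‖x‖ ∂μbar := integral_nonneg fun x => norm_nonneg x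
  constructor
  · -- Lipschitz bound
    intro s hs t ht
    haveI : Nonempty {φ : Euc d → ℝ // LipschitzWith 1 φ} :=
      ⟨⟨fun _ => 0, (LipschitzWith.const 0).weaken zero_le_one⟩⟩
    apply ciSup_le
    rintro ⟨φ, hφ⟩
    set a : ℕ → ℝ := fun n => ∫ x, φ x ∂(sd n) with ha
    have hstep : ∀ n, |a (n + 1) - a n| ≤ V * δ := by
      intro n
      have h1 : sd (n + 1) = flowStep v δ (sd n) := rfl
      have := step_est v V hV hbound hmeas (sd n) (props n).1 δ hδ hφ
        (lip_int (props n).1 hφ) (by rw [← h1]; exact lip_int (props (n+1)).1 hφ)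
      rw [← h1] at this
      exact this
    have hF : ∀ r, 0 ≤ r → (∫ x, φ x ∂(interp sd δ r)) = plin a (r / δ) := by
      intro r hr
      rw [interp_integral sd δ r hδ hr φ (lip_int (props _).1 hφ) (lip_int (props _).1 hφ),
        plin_def]
      have hθ : (r - ⌊r / δ⌋₊ * δ) / δ = r / δ - ⌊r / δ⌋₊ := by field_simp
      rw [hθ]
      ring
    have hVδ : 0 ≤ V * δ := le_of_lt (mul_pos hV hδ)
    rw [hF s hs.1, hF t ht.1]
    rcases le_total s t with h | h
    · have key := plin_lip a (V * δ) hVδ hstep (s / δ) (t / δ)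
        (div_nonneg hs.1 hδ.le) ((div_le_div_iff_of_pos_right hδ).mpr h)
      have heq : (V * δ) * (t / δ - s / δ) = V * (t - s) := by field_simp
      rw [heq] at key
      have habs : |t - s| = t - s := abs_of_nonneg (by linarith)
      rw [habs]
      calc plin a (t / δ) - plin a (s / δ) ≤ |plin a (t / δ) - plin a (s / δ)| := le_abs_self _
        _ ≤ V * (t - s) := key
    · have key := plin_lip a (V * δ) hVδ hstep (t / δ) (s / δ)
        (div_nonneg ht.1 hδ.le) ((div_le_div_iff_of_pos_right hδ).mpr h)
      have heq : (V * δ) * (s / δ - t / δ) = V * (s - t) := by field_simp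
      rw [heq] at key
      have habs : |t - s| = s - t := by rw [abs_sub_comm]; exact abs_of_nonneg (by linarith)
      rw [habs]
      calc plin a (t / δ) - plin a (s / δ) ≤ |plin a (s / δ) - plin a (t / δ)| := by
            rw [abs_sub_comm]; exact le_abs_self _
        _ ≤ V * (s - t) := key
  · -- moment bounds
    intro t ht
    set n := ⌊t / δ⌋₊ with hn
    set θ := (t - n * δ) / δ with hθdef
    have hθδ : θ * δ = t - n * δ := div_mul_cancel₀ _ hδ.ne'
    have hθ0 : 0 ≤ θ := by
      apply div_nonneg _ hδ.le
      have h1 : (n : ℝ) ≤ t / δ := Nat.floor_le (div_nonneg ht.1 hδ.le)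
      have h2 := mul_le_mul_of_nonneg_right h1 hδ.le
      rw [div_mul_cancel₀ _ hδ.ne'] at h2
      linarith
    have hθ1 : θ ≤ 1 := by
      rw [hθdef, div_le_one hδ]
      have h1 : t / δ < n + 1 := Nat.lt_floor_add_one (t / δ)
      have h2 := mul_lt_mul_of_pos_right h1 hδ
      rw [div_mul_cancel₀ _ hδ.ne'] at h2
      nlinarith
    have hnδ : (n : ℝ) * δ ≤ t := by linarith [mul_nonneg hθ0 hδ.le, hθδ]
    have hAn := (props n).2.2.1
    have hAn1 := (props (n + 1)).2.2.1
    have hBn := (props n).2.2.2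
    have hBn1 := (props (n + 1)).2.2.2
    have hcast : ((n + 1 : ℕ) : ℝ) * δ = (n : ℝ) * δ + δ := by push_cast; ring
    rw [hcast] at hAn1 hBn1
    have h1θ : 0 ≤ 1 - θ := by linarith
    constructor
    · rw [interp_integral sd δ t hδ ht.1 _ (props n).1.2 (props (n + 1)).1.2, ← hn, ← hθdef]
      have e1 := mul_le_mul_of_nonneg_left hAn h1θ
      have e2 := mul_le_mul_of_nonneg_left hAn1 hθ0
      nlinarith [mul_nonneg hV.le (by linarith [ht.2] : (0:ℝ) ≤ T - t)]
    · rw [interp_integral sd δ t hδ ht.1 _ (props n).2.1 (props (n + 1)).2.1, ← hn, ← hθdef]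
      have e1 := mul_le_mul_of_nonneg_left hBn h1θ
      have e2 := mul_le_mul_of_nonneg_left hBn1 hθ0
      set A := (n : ℝ) * δ with hA
      have hA0 : 0 ≤ A := mul_nonneg (Nat.cast_nonneg n) hδ.le
      have hQ : (1 - θ) * A ^ 2 + θ * (A + δ) ^ 2 ≤ 2 * T ^ 2 := by
        nlinarith [hθδ, ht.2, hδT, hA0, hδ.le, sq_nonneg (t - A), sq_nonneg (T - t),
          mul_nonneg hθ0 h1θ, mul_nonneg (mul_nonneg hθ0 h1θ) (sq_nonneg δ)]
      have e3 := mul_le_mul_of_nonneg_left hQ (sq_nonneg V)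
      have e4 : 2 * V * (∫ x, ‖x‖ ∂μbar) * (θ * δ) = 2 * V * (∫ x, ‖x‖ ∂μbar) * (t - A) := by
        rw [hθδ]
      have e5 : 0 ≤ 2 * V * (∫ x, ‖x‖ ∂μbar) * (T - t) := by
        apply mul_nonneg (by positivity) (by linarith [ht.2])
      have e6 : 2 * V * (∫ x, ‖x‖ ∂μbar) * A + 2 * V * (∫ x, ‖x‖ ∂μbar) * (t - A)
          = 2 * V * (∫ x, ‖x‖ ∂μbar) * t := by ring
      linarith [e1, e2, e3, e4, e5, e6, mul_nonneg (sq_nonneg V) (sq_nonneg T)]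

end
end

section
/- For the semi-discrete scheme with velocity field satisfying Assumption A and μ̄ ∈ P₁(ℝ^d) ∩ P₂(ℝ^d), there exist a curve μ : [0,T] → P₁(ℝ^d), continuous with respect to W₁, and a subsequence (M^{k_j})_{j≥0} of the interpolated curves such that lim_{j→∞} sup_{t∈[0,T]} W₁(M_t^{k_j}, μ_t) = 0. -/
open MeasureTheory Metric Filter

noncomputable section

instance (d : ℕ) : Nonempty {φ : Euc d → ℝ // LipschitzWith 1 φ} :=
  ⟨⟨fun _ => 0, (LipschitzWith.const 0).weaken zero_le_one⟩⟩

lemma W1_le {d : ℕ} {μ ν : Measure (Euc d)} {c : ℝ}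
    (h : ∀ φ : Euc d → ℝ, LipschitzWith 1 φ →
      (∫ x, φ x ∂ν) - (∫ x, φ x ∂μ) ≤ c) : W1 μ ν ≤ c :=
  ciSup_le fun φ => h φ.1 φ.2

/-- Integrability of a Lipschitz function composed with a map of linear growth. -/
lemma integrable_lip_comp {d : ℕ} (μ : Measure (Euc d)) [IsProbabilityMeasure μ]
    (hm : Integrable (fun x => ‖x‖) μ) {φ : Euc d → ℝ} (hφ : LipschitzWith 1 φ)
    {f : Euc d → Euc d} (hf : Continuous f) {B : ℝ} (hB : ∀ x, ‖f x - x‖ ≤ B) :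
    Integrable (fun x => φ (f x)) μ := by
  refine Integrable.mono' (g := fun x => ‖x‖ + (|φ 0| + B)) (hm.add (integrable_const _))
    ((hφ.continuous.comp hf).aestronglyMeasurable) (Filter.Eventually.of_forall fun x => ?_)
  have h1 : |φ (f x) - φ 0| ≤ ‖f x‖ := by
    have := hφ.dist_le_mul (f x) 0
    simpa [Real.dist_eq, dist_eq_norm] using this
  have h2 : ‖f x‖ ≤ ‖x‖ + B := by
    have := norm_sub_norm_le (f x) x
    have := hB x
    have : ‖f x‖ - ‖x‖ ≤ B := le_trans (by simpa using norm_sub_norm_le (f x) x) (hB x)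
    linarith
  have : |φ (f x)| ≤ |φ 0| + ‖f x‖ := by
    have := abs_sub_abs_le_abs_sub (φ (f x)) (φ 0)
    linarith [abs_nonneg (φ (f x))]
  simp only [Real.norm_eq_abs]
  calc |φ (f x)| ≤ |φ 0| + ‖f x‖ := this
    _ ≤ |φ 0| + (‖x‖ + B) := by linarith
    _ = ‖x‖ + (|φ 0| + B) := by ring

-- new part
lemma lip_sub_le {d : ℕ} {φ : Euc d → ℝ} (hφ : LipschitzWith 1 φ) (a b : Euc d) :
    φ a - φ b ≤ ‖a - b‖ := by
  have := hφ.dist_le_mul a b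
  rw [Real.dist_eq, dist_eq_norm] at this
  exact (abs_le.mp (by simpa using this)).2

/-- estimate for pushforwards of a common measure. -/
lemma W1_map_le {d : ℕ} (μ : Measure (Euc d)) [IsProbabilityMeasure μ]
    (hm : Integrable (fun x => ‖x‖) μ) {f g : Euc d → Euc d}
    (hf : Continuous f) (hg : Continuous g)
    {Bf Bg : ℝ} (hBf : ∀ x, ‖f x - x‖ ≤ Bf) (hBg : ∀ x, ‖g x - x‖ ≤ Bg)
    {C : ℝ} (h : ∀ x, ‖g x - f x‖ ≤ C) :
    W1 (μ.map f) (μ.map g) ≤ C := by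
  refine W1_le fun φ hφ => ?_
  rw [integral_map hf.aemeasurable hφ.continuous.aestronglyMeasurable,
    integral_map hg.aemeasurable hφ.continuous.aestronglyMeasurable]
  have hif : Integrable (fun x => φ (f x)) μ := integrable_lip_comp μ hm hφ hf hBf
  have hig : Integrable (fun x => φ (g x)) μ := integrable_lip_comp μ hm hφ hg hBg
  rw [← integral_sub hig hif]
  calc ∫ x, (φ (g x) - φ (f x)) ∂μ ≤ ∫ _, C ∂μ := by
        refine integral_mono (hig.sub hif) (integrable_const C) fun x => ?_
        exact le_trans (lip_sub_le hφ _ _) (h x)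
    _ = C := by simp

lemma lip_integrable {d : ℕ} {μ : Measure (Euc d)} (hμ : P1 μ)
    {φ : Euc d → ℝ} (hφ : LipschitzWith 1 φ) : Integrable φ μ := by
  have : IsProbabilityMeasure μ := hμ.1
  refine Integrable.mono' (g := fun x => ‖x‖ + |φ 0|) (hμ.2.add (integrable_const _))
    hφ.continuous.aestronglyMeasurable (Filter.Eventually.of_forall fun x => ?_)
  have h1 : |φ x - φ 0| ≤ ‖x‖ := by
    have := hφ.dist_le_mul x 0
    rw [Real.dist_eq, dist_eq_norm] at this
    simpa using this
  have := abs_sub_abs_le_abs_sub (φ x) (φ 0)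
  simp only [Real.norm_eq_abs]
  linarith

lemma lip_int_sub_le {d : ℕ} {μ ρ : Measure (Euc d)} (hμ : P1 μ) (hρ : P1 ρ)
    {φ : Euc d → ℝ} (hφ : LipschitzWith 1 φ) :
    (∫ x, φ x ∂ρ) - (∫ x, φ x ∂μ) ≤ (∫ x, ‖x‖ ∂ρ) + (∫ x, ‖x‖ ∂μ) := by
  have : IsProbabilityMeasure μ := hμ.1
  have : IsProbabilityMeasure ρ := hρ.1
  have key : ∀ (ν : Measure (Euc d)), P1 ν →
      (∫ x, φ x ∂ν) - φ 0 ≤ ∫ x, ‖x‖ ∂ν ∧ -(∫ x, ‖x‖ ∂ν) ≤ (∫ x, φ x ∂ν) - φ 0 := by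
    intro ν hν
    have : IsProbabilityMeasure ν := hν.1
    have hint : Integrable φ ν := lip_integrable hν hφ
    have h0 : (∫ x, φ x ∂ν) - φ 0 = ∫ x, (φ x - φ 0) ∂ν := by
      rw [integral_sub hint (integrable_const _)]; simp
    have habs : ∀ x : Euc d, |φ x - φ 0| ≤ ‖x‖ := fun x => by
      have := hφ.dist_le_mul x 0
      rw [Real.dist_eq, dist_eq_norm] at this
      simpa using this
    constructor
    · rw [h0]
      exact integral_mono (hint.sub (integrable_const _)) hν.2
        (fun x => le_trans (le_abs_self _) (habs x))
    · rw [h0]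
      have := integral_mono (hν.2.neg) (hint.sub (integrable_const _))
        (fun x => by have := (abs_le.mp (habs x)).1; simpa using this)
      simp only [Pi.neg_apply, Pi.sub_apply, integral_neg] at this
      simpa using this
  have h1 := key ρ hρ
  have h2 := key μ hμ
  linarith [h1.1, h2.2]

lemma W1_bddAbove {d : ℕ} {μ ρ : Measure (Euc d)} (hμ : P1 μ) (hρ : P1 ρ) :
    BddAbove (Set.range fun φ : {φ : Euc d → ℝ // LipschitzWith 1 φ} =>
      (∫ x, φ.1 x ∂ρ) - (∫ x, φ.1 x ∂μ)) := by
  refine ⟨(∫ x, ‖x‖ ∂ρ) + (∫ x, ‖x‖ ∂μ), ?_⟩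
  rintro y ⟨φ, rfl⟩
  exact lip_int_sub_le hμ hρ φ.2

lemma le_W1 {d : ℕ} {μ ρ : Measure (Euc d)} (hμ : P1 μ) (hρ : P1 ρ)
    {φ : Euc d → ℝ} (hφ : LipschitzWith 1 φ) :
    (∫ x, φ x ∂ρ) - (∫ x, φ x ∂μ) ≤ W1 μ ρ :=
  le_ciSup (W1_bddAbove hμ hρ) (⟨φ, hφ⟩ : {φ : Euc d → ℝ // LipschitzWith 1 φ})

/-- convexity of W1 in the first argument. -/
lemma W1_convex {d : ℕ} {μ₁ μ₂ ρ : Measure (Euc d)} (h1 : P1 μ₁) (h2 : P1 μ₂) (hρ : P1 ρ)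
    {a b : ℝ} (ha : 0 ≤ a) (hb : 0 ≤ b) (hab : a + b = 1) :
    W1 (ENNReal.ofReal a • μ₁ + ENNReal.ofReal b • μ₂) ρ ≤ a * W1 μ₁ ρ + b * W1 μ₂ ρ := by
  refine ciSup_le fun φ => ?_
  have hia : Integrable φ.1 (ENNReal.ofReal a • μ₁) :=
    (lip_integrable h1 φ.2).smul_measure ENNReal.ofReal_ne_top
  have hib : Integrable φ.1 (ENNReal.ofReal b • μ₂) :=
    (lip_integrable h2 φ.2).smul_measure ENNReal.ofReal_ne_top
  rw [integral_add_measure hia hib, integral_smul_measure, integral_smul_measure,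
    ENNReal.toReal_ofReal ha, ENNReal.toReal_ofReal hb]
  have expand : (∫ x, φ.1 x ∂ρ) = a * (∫ x, φ.1 x ∂ρ) + b * (∫ x, φ.1 x ∂ρ) := by
    rw [← add_mul, hab, one_mul]
  rw [expand]
  have e1 : (∫ x, φ.1 x ∂ρ) - (∫ x, φ.1 x ∂μ₁) ≤ W1 μ₁ ρ := le_W1 h1 hρ φ.2
  have e2 : (∫ x, φ.1 x ∂ρ) - (∫ x, φ.1 x ∂μ₂) ≤ W1 μ₂ ρ := le_W1 h2 hρ φ.2
  have := mul_le_mul_of_nonneg_left e1 ha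
  have := mul_le_mul_of_nonneg_left e2 hb
  simp only [smul_eq_mul]
  nlinarith


lemma gronwall_aux {f : ℝ → ℝ} {A B M T : ℝ} (hA : 0 ≤ A) (hB : 0 ≤ B) (hM : 0 ≤ M)
    (hf : ContinuousOn f (Set.Icc 0 T))
    (hbd : ∀ t ∈ Set.Icc (0:ℝ) T, f t ≤ M)
    (h : ∀ t ∈ Set.Icc (0:ℝ) T, f t ≤ A + B * ∫ s in (0:ℝ)..t, f s) :
    ∀ n : ℕ, ∀ t ∈ Set.Icc (0:ℝ) T,
      f t ≤ A * (∑ i ∈ Finset.range n, (B*t)^i / i.factorial) + M * ((B*t)^n / n.factorial) := by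
  have hkey : ∀ (i : ℕ) (t : ℝ), B * ∫ s in (0:ℝ)..t, (B*s)^i / i.factorial
      = (B*t)^(i+1) / (i+1).factorial := by
    intro i t
    have h1 : (fun s : ℝ => (B*s)^i / i.factorial) = fun s : ℝ => (B^i / i.factorial) * s^i := by
      funext s; rw [mul_pow]; ring
    rw [h1, intervalIntegral.integral_const_mul, integral_pow, Nat.factorial_succ, mul_pow]
    push_cast
    field_simp
    ring
  intro n
  induction n with
  | zero => intro t ht; simpa using hbd t ht
  | succ n ih =>
    intro t ht
    have hint : IntervalIntegrable f MeasureTheory.volume 0 t :=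
      (hf.mono (by rw [Set.uIcc_of_le ht.1]; exact Set.Icc_subset_Icc le_rfl ht.2)).intervalIntegrable
    have hcont : ∀ m : ℕ, Continuous (fun s : ℝ => (B*s)^m / (m.factorial : ℝ)) := by
      intro m; continuity
    have hcontP : Continuous (fun s : ℝ =>
        A * (∑ i ∈ Finset.range n, (B*s)^i / (i.factorial:ℝ)) + M * ((B*s)^n / (n.factorial:ℝ))) :=
      ((continuous_const.mul (continuous_finset_sum _ (fun i _ => hcont i))).add (continuous_const.mul (hcont n)))
    have hmono : (∫ s in (0:ℝ)..t, f s) ≤ ∫ s in (0:ℝ)..t,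
        (A * (∑ i ∈ Finset.range n, (B*s)^i / i.factorial) + M * ((B*s)^n / n.factorial)) := by
      apply intervalIntegral.integral_mono_on ht.1 hint (hcontP.intervalIntegrable _ _)
      intro s hs
      exact ih s ⟨hs.1, le_trans hs.2 ht.2⟩
    have hsum : B * (∫ s in (0:ℝ)..t, ∑ i ∈ Finset.range n, (B*s)^i / (i.factorial:ℝ))
        = ∑ i ∈ Finset.range n, (B*t)^(i+1) / ((i+1).factorial : ℝ) := by
      rw [intervalIntegral.integral_finset_sum (fun i _ => (hcont i).intervalIntegrable _ _),
        Finset.mul_sum]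
      exact Finset.sum_congr rfl fun i _ => hkey i t
    have hIval : B * (∫ s in (0:ℝ)..t,
        (A * (∑ i ∈ Finset.range n, (B*s)^i / i.factorial) + M * ((B*s)^n / n.factorial)))
        = A * (∑ i ∈ Finset.range n, (B*t)^(i+1) / (i+1).factorial)
          + M * ((B*t)^(n+1) / (n+1).factorial) := by
      rw [intervalIntegral.integral_add, intervalIntegral.integral_const_mul,
        intervalIntegral.integral_const_mul]
      · rw [← hsum, ← hkey n t]; ring
      · exact (continuous_const.mul (continuous_finset_sum _ (fun i _ => hcont i))).intervalIntegrable _ _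
      · exact (continuous_const.mul (hcont n)).intervalIntegrable _ _
    have hshift : A + (A * (∑ i ∈ Finset.range n, (B*t)^(i+1) / (i+1).factorial))
        = A * (∑ i ∈ Finset.range (n+1), (B*t)^i / i.factorial) := by
      rw [Finset.sum_range_succ' (fun i => (B*t)^i / (i.factorial : ℝ)) n]
      simp [mul_add]
      ring
    calc f t ≤ A + B * ∫ s in (0:ℝ)..t, f s := h t ht
      _ ≤ A + B * ∫ s in (0:ℝ)..t,
          (A * (∑ i ∈ Finset.range n, (B*s)^i / i.factorial) + M * ((B*s)^n / n.factorial)) := by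
          nlinarith [hmono]
      _ = A * (∑ i ∈ Finset.range (n+1), (B*t)^i / i.factorial)
          + M * ((B*t)^(n+1) / (n+1).factorial) := by rw [hIval, ← hshift]; ring

lemma gronwall {f : ℝ → ℝ} {A B M T : ℝ} (hA : 0 ≤ A) (hB : 0 ≤ B) (hM : 0 ≤ M)
    (hf : ContinuousOn f (Set.Icc 0 T))
    (hbd : ∀ t ∈ Set.Icc (0:ℝ) T, f t ≤ M)
    (h : ∀ t ∈ Set.Icc (0:ℝ) T, f t ≤ A + B * ∫ s in (0:ℝ)..t, f s) :
    ∀ t ∈ Set.Icc (0:ℝ) T, f t ≤ A * Real.exp (B * t) := by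
  intro t ht
  have hle : ∀ n : ℕ, f t ≤ A * Real.exp (B * t) + M * ((B*t)^n / n.factorial) := by
    intro n
    refine le_trans (gronwall_aux hA hB hM hf hbd h n t ht) ?_
    have hBt : 0 ≤ B * t := mul_nonneg hB ht.1
    have := Real.sum_le_exp_of_nonneg hBt n
    nlinarith
  have htend : Tendsto (fun n : ℕ => A * Real.exp (B * t) + M * ((B*t)^n / n.factorial))
      atTop (nhds (A * Real.exp (B * t))) := by
    have h0 : Tendsto (fun n : ℕ => (B*t)^n / (n.factorial : ℝ)) atTop (nhds 0) :=
      FloorSemiring.tendsto_pow_div_factorial_atTop (B*t)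
    have := (h0.const_mul M).const_add (A * Real.exp (B * t))
    simpa using this
  exact ge_of_tendsto' htend hle


lemma W1_self {d : ℕ} (μ : Measure (Euc d)) : W1 μ μ = 0 := by unfold W1; simp

-- new material
lemma cont_of_norm_lip {d : ℕ} {f : Euc d → Euc d} {K : ℝ} (hK : 0 ≤ K)
    (h : ∀ x y, ‖f x - f y‖ ≤ K * ‖x - y‖) : Continuous f := by
  have : LipschitzWith K.toNNReal f := by
    apply LipschitzWith.of_dist_le_mul
    intro x y
    rw [dist_eq_norm, dist_eq_norm, Real.coe_toNNReal K hK]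
    exact h x y
  exact this.continuous

section Flow
variable {d : ℕ} (v : Measure (Euc d) → Euc d → Euc d) (μbar : Measure (Euc d)) (Δt : ℝ)

/-- The discrete flow maps of the semi-discrete scheme. -/
def Xf : ℕ → Euc d → Euc d
  | 0 => fun x => x
  | n + 1 => fun x =>
      Xf n x + Δt • v (sdScheme v μbar Δt n) (Xf n x)

variable {v} {μbar} {Δt} {V L : ℝ}

lemma v_lip (hA : AssumptionA v V L) {μ : Measure (Euc d)} (hμ : P1 μ) (x y : Euc d) :
    ‖v μ x - v μ y‖ ≤ L * ‖x - y‖ := by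
  have := hA.2.2.2.1 μ μ hμ hμ y x
  rwa [W1_self, add_zero] at this

lemma sd_props_s6 (hA : AssumptionA v V L) (hμ1 : P1 μbar) (hΔt : 0 < Δt) (n : ℕ) :
    P1 (sdScheme v μbar Δt n) ∧
    sdScheme v μbar Δt n = μbar.map (Xf v μbar Δt n) ∧
    Continuous (Xf v μbar Δt n) ∧
    (∀ x, ‖Xf v μbar Δt n x - x‖ ≤ n * Δt * V) ∧
    (∀ x y, ‖Xf v μbar Δt n x - Xf v μbar Δt n y‖ ≤ (1 + L * Δt)^n * ‖x - y‖) := by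
  have hV := hA.1
  have hL := hA.2.1
  induction n with
  | zero =>
    refine ⟨hμ1, ?_, continuous_id, ?_, ?_⟩
    · simp [sdScheme, Xf, Measure.map_id]
    · intro x; simp [Xf]
    · intro x y; simp [Xf]
  | succ n ih =>
    obtain ⟨hP1, hmap, hcont, hgrow, hlip⟩ := ih
    have hvb : ∀ x, ‖v (sdScheme v μbar Δt n) x‖ ≤ V := hA.2.2.1 _ hP1
    have hvl := v_lip hA hP1
    have hvcont : Continuous (v (sdScheme v μbar Δt n)) :=
      cont_of_norm_lip hL.le (v_lip hA hP1)
    have hcont1 : Continuous (Xf v μbar Δt (n+1)) := by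
      show Continuous fun x => Xf v μbar Δt n x + Δt • v (sdScheme v μbar Δt n) (Xf v μbar Δt n x)
      exact hcont.add ((hvcont.comp hcont).const_smul Δt)
    have hgrow1 : ∀ x, ‖Xf v μbar Δt (n+1) x - x‖ ≤ (n+1 : ℕ) * Δt * V := by
      intro x
      have : Xf v μbar Δt (n+1) x - x
          = (Xf v μbar Δt n x - x) + Δt • v (sdScheme v μbar Δt n) (Xf v μbar Δt n x) := by
        show Xf v μbar Δt n x + Δt • v (sdScheme v μbar Δt n) (Xf v μbar Δt n x) - x = _
        abel
      rw [this]
      refine le_trans (norm_add_le _ _) ?_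
      rw [norm_smul, Real.norm_eq_abs, abs_of_pos hΔt]
      have := hvb (Xf v μbar Δt n x)
      have := hgrow x
      push_cast
      nlinarith
    have hlip1 : ∀ x y, ‖Xf v μbar Δt (n+1) x - Xf v μbar Δt (n+1) y‖
        ≤ (1 + L * Δt)^(n+1) * ‖x - y‖ := by
      intro x y
      have hd : Xf v μbar Δt (n+1) x - Xf v μbar Δt (n+1) y
          = (Xf v μbar Δt n x - Xf v μbar Δt n y) +
            Δt • (v (sdScheme v μbar Δt n) (Xf v μbar Δt n x)
              - v (sdScheme v μbar Δt n) (Xf v μbar Δt n y)) := by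
        show Xf v μbar Δt n x + Δt • v (sdScheme v μbar Δt n) (Xf v μbar Δt n x)
          - (Xf v μbar Δt n y + Δt • v (sdScheme v μbar Δt n) (Xf v μbar Δt n y)) = _
        rw [smul_sub]; abel
      rw [hd]
      refine le_trans (norm_add_le _ _) ?_
      rw [norm_smul, Real.norm_eq_abs, abs_of_pos hΔt]
      have h1 := hvl (Xf v μbar Δt n x) (Xf v μbar Δt n y)
      have h2 := hlip x y
      have hpow : (0:ℝ) ≤ (1 + L * Δt)^n := by positivity
      have : (1 + L * Δt)^(n+1) = (1 + L*Δt)^n + L * Δt * (1+L*Δt)^n := by ring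
      rw [this]
      have h3 : (1 + L * Δt) * ‖Xf v μbar Δt n x - Xf v μbar Δt n y‖
          ≤ (1 + L * Δt) * ((1 + L * Δt)^n * ‖x - y‖) :=
        mul_le_mul_of_nonneg_left h2 (by positivity)
      nlinarith [norm_nonneg (Xf v μbar Δt n x - Xf v μbar Δt n y), norm_nonneg (x - y)]
    have hmap1 : sdScheme v μbar Δt (n+1) = μbar.map (Xf v μbar Δt (n+1)) := by
      show flowStep v Δt (sdScheme v μbar Δt n) = _
      rw [flowStep]
      rw [show (sdScheme v μbar Δt n).map (fun x => x + Δt • v (sdScheme v μbar Δt n) x)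
          = (μbar.map (Xf v μbar Δt n)).map (fun x => x + Δt • v (sdScheme v μbar Δt n) x) from by
        rw [← hmap]]
      have hgm : Measurable fun x : Euc d => x + Δt • v (sdScheme v μbar Δt n) x :=
        (continuous_id.add (hvcont.const_smul Δt)).measurable
      rw [Measure.map_map hgm hcont.measurable]
      rfl
    have hP11 : P1 (sdScheme v μbar Δt (n+1)) := by
      rw [hmap1]
      have : IsProbabilityMeasure μbar := hμ1.1
      constructor
      · exact Measure.isProbabilityMeasure_map hcont1.measurable.aemeasurable
      · rw [integrable_map_measure (continuous_norm.aestronglyMeasurable)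
          hcont1.measurable.aemeasurable]
        refine Integrable.mono' (g := fun x => ‖x‖ + (n+1 : ℕ) * Δt * V)
          (hμ1.2.add (integrable_const _))
          (continuous_norm.comp hcont1).aestronglyMeasurable
          (Filter.Eventually.of_forall fun x => ?_)
        have h2 := hgrow1 x
        have := norm_sub_norm_le (Xf v μbar Δt (n+1) x) x
        simp only [Function.comp, Real.norm_eq_abs, abs_of_nonneg (norm_nonneg _)]
        linarith
    exact ⟨hP11, hmap1, hcont1, hgrow1, hlip1⟩

end Flow

section ZFlow
variable {d : ℕ} (v : Measure (Euc d) → Euc d → Euc d) (μbar : Measure (Euc d)) (Δt : ℝ)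

/-- Piecewise-constant-in-time velocity along the scheme. -/
def wvel (s : ℝ) (x : Euc d) : Euc d :=
  v (sdScheme v μbar Δt ⌊s/Δt⌋₊) (Xf v μbar Δt ⌊s/Δt⌋₊ x)

/-- Continuous-time interpolation of the discrete flow maps. -/
def Zf (t : ℝ) (x : Euc d) : Euc d := x + ∫ s in (0:ℝ)..t, wvel v μbar Δt s x

variable {v μbar Δt} {V L : ℝ}

lemma wvel_bound (hA : AssumptionA v V L) (hμ1 : P1 μbar) (hΔt : 0 < Δt) (s : ℝ) (x : Euc d) :
    ‖wvel v μbar Δt s x‖ ≤ V :=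
  hA.2.2.1 _ (sd_props_s6 hA hμ1 hΔt _).1 _

lemma wvel_meas (hΔt : 0 < Δt) (x : Euc d) : Measurable (fun s => wvel v μbar Δt s x) := by
  have h1 : Monotone (fun s : ℝ => ⌊s/Δt⌋₊) := fun a b hab => Nat.floor_mono (by gcongr)
  have h2 : Measurable (fun n : ℕ => v (sdScheme v μbar Δt n) (Xf v μbar Δt n x)) :=
    measurable_from_top
  exact h2.comp h1.measurable

lemma wvel_intervalIntegrable (hA : AssumptionA v V L) (hμ1 : P1 μbar) (hΔt : 0 < Δt)
    (x : Euc d) (a b : ℝ) : IntervalIntegrable (fun s => wvel v μbar Δt s x)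
      MeasureTheory.volume a b := by
  constructor <;>
  · refine Integrable.mono' (integrable_const V) ((wvel_meas hΔt x).aestronglyMeasurable) ?_
    exact Filter.Eventually.of_forall fun s => wvel_bound hA hμ1 hΔt s x


lemma Zf_sub_eq (hA : AssumptionA v V L) (hμ1 : P1 μbar) (hΔt : 0 < Δt) (x : Euc d) (s t : ℝ) :
    Zf v μbar Δt t x - Zf v μbar Δt s x = ∫ u in s..t, wvel v μbar Δt u x := by
  rw [Zf, Zf]
  rw [← intervalIntegral.integral_interval_sub_left (wvel_intervalIntegrable hA hμ1 hΔt x 0 t)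
    (wvel_intervalIntegrable hA hμ1 hΔt x 0 s)]
  abel

lemma Zf_dist (hA : AssumptionA v V L) (hμ1 : P1 μbar) (hΔt : 0 < Δt) (x : Euc d) (s t : ℝ) :
    ‖Zf v μbar Δt t x - Zf v μbar Δt s x‖ ≤ V * |t - s| := by
  rw [Zf_sub_eq hA hμ1 hΔt]
  exact intervalIntegral.norm_integral_le_of_norm_le_const
    (fun u _ => wvel_bound hA hμ1 hΔt u x)

lemma Zf_zero (x : Euc d) : Zf v μbar Δt 0 x = x := by simp [Zf]

lemma Zf_grid (hA : AssumptionA v V L) (hμ1 : P1 μbar) (hΔt : 0 < Δt) (x : Euc d) (n : ℕ) :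
    Zf v μbar Δt (n * Δt) x = Xf v μbar Δt n x := by
  induction n with
  | zero => simpa [Xf] using Zf_zero x
  | succ n ih =>
    have key : Zf v μbar Δt ((n+1 : ℕ) * Δt) x - Zf v μbar Δt (n * Δt) x
        = Δt • v (sdScheme v μbar Δt n) (Xf v μbar Δt n x) := by
      rw [Zf_sub_eq hA hμ1 hΔt]
      have hcongr : ∀ᵐ s ∂(MeasureTheory.volume : Measure ℝ),
          s ∈ Set.uIoc ((n:ℝ) * Δt) ((n+1 : ℕ) * Δt) →
          wvel v μbar Δt s x = v (sdScheme v μbar Δt n) (Xf v μbar Δt n x) := by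
        have hne : (MeasureTheory.volume : Measure ℝ) {((n+1 : ℕ) * Δt : ℝ)} = 0 :=
          measure_singleton _
        filter_upwards [measure_eq_zero_iff_ae_notMem.mp hne] with s hs hmem
        have hle : (n:ℝ) * Δt ≤ (n+1 : ℕ) * Δt := by
          push_cast; nlinarith
        rw [Set.uIoc_of_le hle] at hmem
        have hlt : s < ((n:ℝ)+1) * Δt := by
          rcases lt_or_eq_of_le hmem.2 with h | h
          · push_cast at h ⊢; linarith
          · exfalso; apply hs; push_cast at h ⊢; exact h
        have hs0 : (0:ℝ) ≤ s := le_trans (by positivity) hmem.1.le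
        have hfloor : ⌊s/Δt⌋₊ = n := by
          rw [Nat.floor_eq_iff (by positivity)]
          constructor
          · rw [le_div_iff₀ hΔt]; linarith [hmem.1]
          · rw [div_lt_iff₀ hΔt]; push_cast; linarith
        rw [wvel, hfloor]
      rw [intervalIntegral.integral_congr_ae hcongr, intervalIntegral.integral_const]
      push_cast
      congr 1
      ring
    have := key
    rw [ih] at this
    have : Zf v μbar Δt ((n+1 : ℕ) * Δt) x
        = Xf v μbar Δt n x + Δt • v (sdScheme v μbar Δt n) (Xf v μbar Δt n x) := by
      rw [← this]; abel
    rw [this]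
    rfl

lemma Zf_floor (hA : AssumptionA v V L) (hμ1 : P1 μbar) (hΔt : 0 < Δt) (x : Euc d)
    {t : ℝ} (ht : 0 ≤ t) :
    ‖Zf v μbar Δt t x - Xf v μbar Δt ⌊t/Δt⌋₊ x‖ ≤ V * Δt := by
  set n := ⌊t/Δt⌋₊ with hn
  have h1 : (n : ℝ) * Δt ≤ t := by
    rw [← le_div_iff₀ hΔt]
    exact Nat.floor_le (by positivity)
  have h2 : t < ((n : ℝ) + 1) * Δt := by
    rw [← div_lt_iff₀ hΔt]
    exact Nat.lt_floor_add_one _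
  rw [← Zf_grid hA hμ1 hΔt x n]
  refine le_trans (Zf_dist hA hμ1 hΔt x _ _) ?_
  have hV := hA.1
  rw [abs_of_nonneg (by linarith)]
  nlinarith

lemma Zf_x_lip (hA : AssumptionA v V L) (hμ1 : P1 μbar) (hΔt : 0 < Δt)
    {t : ℝ} (ht : 0 ≤ t) (x y : Euc d) :
    ‖Zf v μbar Δt t x - Zf v μbar Δt t y‖ ≤ (1 + t * L * Real.exp (L * t)) * ‖x - y‖ := by
  have hL := hA.2.1
  have hd : Zf v μbar Δt t x - Zf v μbar Δt t y
      = (x - y) + ∫ s in (0:ℝ)..t, (wvel v μbar Δt s x - wvel v μbar Δt s y) := by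
    rw [Zf, Zf, intervalIntegral.integral_sub (wvel_intervalIntegrable hA hμ1 hΔt x 0 t)
      (wvel_intervalIntegrable hA hμ1 hΔt y 0 t)]
    abel
  rw [hd]
  refine le_trans (norm_add_le _ _) ?_
  have hbound : ∀ s ∈ Set.uIoc (0:ℝ) t,
      ‖wvel v μbar Δt s x - wvel v μbar Δt s y‖ ≤ L * Real.exp (L * t) * ‖x - y‖ := by
    intro s hs
    rw [Set.uIoc_of_le ht] at hs
    set m := ⌊s/Δt⌋₊ with hm
    have hsd : (m : ℝ) * Δt ≤ s := by
      rw [← le_div_iff₀ hΔt]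
      exact Nat.floor_le (div_nonneg hs.1.le hΔt.le)
    have hP1 := (sd_props_s6 hA hμ1 hΔt m).1
    have hlipm := (sd_props_s6 hA hμ1 hΔt m).2.2.2.2 x y
    have h1 : ‖wvel v μbar Δt s x - wvel v μbar Δt s y‖
        ≤ L * ‖Xf v μbar Δt m x - Xf v μbar Δt m y‖ := v_lip hA hP1 _ _
    have hpow : (1 + L * Δt)^m ≤ Real.exp (L * t) := by
      have e1 : (1 + L * Δt) ≤ Real.exp (L * Δt) := by
        have := Real.add_one_le_exp (L * Δt)
        linarith
      have e2 : (1 + L * Δt)^m ≤ Real.exp (L * Δt)^m :=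
        pow_le_pow_left₀ (by positivity) e1 m
      rw [← Real.exp_nat_mul] at e2
      refine le_trans e2 (Real.exp_le_exp.mpr ?_)
      have : (m : ℝ) * Δt ≤ t := le_trans hsd hs.2
      nlinarith
    calc ‖wvel v μbar Δt s x - wvel v μbar Δt s y‖
        ≤ L * ‖Xf v μbar Δt m x - Xf v μbar Δt m y‖ := h1
      _ ≤ L * ((1 + L * Δt)^m * ‖x - y‖) := by
          exact mul_le_mul_of_nonneg_left hlipm hL.le
      _ ≤ L * Real.exp (L * t) * ‖x - y‖ := by
          rw [mul_assoc]
          refine mul_le_mul_of_nonneg_left ?_ hL.le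
          exact mul_le_mul_of_nonneg_right hpow (norm_nonneg _)
  have := intervalIntegral.norm_integral_le_of_norm_le_const hbound
  rw [sub_zero, abs_of_nonneg ht] at this
  nlinarith [norm_nonneg (x - y), this]

end ZFlow

section Compare
variable {d : ℕ} {v : Measure (Euc d) → Euc d → Euc d} {μbar : Measure (Euc d)} {V L : ℝ}

lemma W1_le' {d : ℕ} {μ ν : Measure (Euc d)} {c : ℝ}
    (h : ∀ φ : Euc d → ℝ, LipschitzWith 1 φ →
      (∫ x, φ x ∂ν) - (∫ x, φ x ∂μ) ≤ c) : W1 μ ν ≤ c :=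
  ciSup_le fun φ => h φ.1 φ.2

/-- Main two-grid stability estimate. -/
lemma Zf_compare (hA : AssumptionA v V L) (hμ1 : P1 μbar)
    (W1_map_le : ∀ (f g : Euc d → Euc d), Continuous f → Continuous g →
      ∀ (Bf Bg : ℝ), (∀ x, ‖f x - x‖ ≤ Bf) → (∀ x, ‖g x - x‖ ≤ Bg) →
      ∀ (C : ℝ), (∀ x, ‖g x - f x‖ ≤ C) → W1 (μbar.map f) (μbar.map g) ≤ C)
    {Δt₁ Δt₂ : ℝ} (h1 : 0 < Δt₁) (h2 : 0 < Δt₂) {T : ℝ} (hT : 0 < T) :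
    ∀ t ∈ Set.Icc (0:ℝ) T, ∀ x : Euc d,
      ‖Zf v μbar Δt₁ t x - Zf v μbar Δt₂ t x‖
        ≤ V * (Δt₁ + Δt₂) * Real.exp (2 * L * T) := by
  have hV := hA.1
  have hL := hA.2.1
  set ε := V * (Δt₁ + Δt₂) with hε
  have hεpos : 0 < ε := by positivity
  set D : ℝ → ℝ := fun t => ⨆ x : Euc d, ‖Zf v μbar Δt₁ t x - Zf v μbar Δt₂ t x‖ with hD
  have hptb : ∀ (t : ℝ) (x : Euc d), ‖Zf v μbar Δt₁ t x - Zf v μbar Δt₂ t x‖ ≤ 2*V*|t| := by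
    intro t x
    have e1 := Zf_dist hA hμ1 h1 x 0 t
    have e2 := Zf_dist hA hμ1 h2 x 0 t
    rw [Zf_zero] at e1 e2
    have := norm_sub_le (Zf v μbar Δt₁ t x - x) (Zf v μbar Δt₂ t x - x)
    simp only [sub_sub_sub_cancel_right] at this
    rw [sub_zero] at e1 e2
    linarith
  have hbdd : ∀ t : ℝ, BddAbove (Set.range fun x : Euc d =>
      ‖Zf v μbar Δt₁ t x - Zf v μbar Δt₂ t x‖) := by
    intro t
    exact ⟨2*V*|t|, by rintro y ⟨x, rfl⟩; exact hptb t x⟩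
  have hDle : ∀ (t : ℝ) (x : Euc d), ‖Zf v μbar Δt₁ t x - Zf v μbar Δt₂ t x‖ ≤ D t :=
    fun t x => le_ciSup (hbdd t) x
  have hDbd : ∀ t : ℝ, D t ≤ 2*V*|t| := fun t => ciSup_le (hptb t)
  have hDnn : ∀ t : ℝ, 0 ≤ D t := fun t =>
    Real.iSup_nonneg (fun x => norm_nonneg _)
  have hDlipone : ∀ s t : ℝ, D t ≤ D s + 2*V*|t - s| := by
    intro s t
    refine ciSup_le fun x => ?_
    have e1 := Zf_dist hA hμ1 h1 x s t
    have e2 := Zf_dist hA hμ1 h2 x s t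
    have e3 := hDle s x
    calc ‖Zf v μbar Δt₁ t x - Zf v μbar Δt₂ t x‖
        ≤ ‖Zf v μbar Δt₁ t x - Zf v μbar Δt₁ s x‖ + ‖Zf v μbar Δt₁ s x - Zf v μbar Δt₂ s x‖
          + ‖Zf v μbar Δt₂ s x - Zf v μbar Δt₂ t x‖ := by
          have := norm_add₃_le (a := Zf v μbar Δt₁ t x - Zf v μbar Δt₁ s x)
            (b := Zf v μbar Δt₁ s x - Zf v μbar Δt₂ s x)
            (c := Zf v μbar Δt₂ s x - Zf v μbar Δt₂ t x)
          convert this using 2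
          · rfl
          · abel
      _ ≤ D s + 2*V*|t - s| := by
          rw [norm_sub_rev (Zf v μbar Δt₂ s x)] at *
          have : |s - t| = |t - s| := abs_sub_comm s t
          linarith [e1, e2, e3, this.le]
  have hDcont : Continuous D := by
    have : LipschitzWith (2*V : ℝ).toNNReal D := by
      apply LipschitzWith.of_dist_le_mul
      intro a b
      rw [Real.dist_eq, Real.dist_eq, Real.coe_toNNReal _ (by positivity)]
      rw [abs_sub_le_iff]
      constructor
      · have h := hDlipone b a; linarith
      · have h := hDlipone a b
        have e : |b - a| = |a - b| := abs_sub_comm b a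
        rw [e] at h
        linarith
    exact this.continuous
  -- velocity comparison
  have hw : ∀ s, 0 ≤ s → ∀ x : Euc d,
      ‖wvel v μbar Δt₁ s x - wvel v μbar Δt₂ s x‖ ≤ 2*L*(D s + ε) := by
    intro s hs x
    set n₁ := ⌊s/Δt₁⌋₊
    set n₂ := ⌊s/Δt₂⌋₊
    have hfl1 : ∀ z : Euc d, ‖Xf v μbar Δt₁ n₁ z - Zf v μbar Δt₁ s z‖ ≤ V * Δt₁ := by
      intro z; rw [norm_sub_rev]; exact Zf_floor hA hμ1 h1 z hs
    have hfl2 : ∀ z : Euc d, ‖Xf v μbar Δt₂ n₂ z - Zf v μbar Δt₂ s z‖ ≤ V * Δt₂ := by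
      intro z; rw [norm_sub_rev]; exact Zf_floor hA hμ1 h2 z hs
    have hpt : ∀ z : Euc d, ‖Xf v μbar Δt₂ n₂ z - Xf v μbar Δt₁ n₁ z‖ ≤ D s + ε := by
      intro z
      calc ‖Xf v μbar Δt₂ n₂ z - Xf v μbar Δt₁ n₁ z‖
          ≤ ‖Xf v μbar Δt₂ n₂ z - Zf v μbar Δt₂ s z‖
            + ‖Zf v μbar Δt₂ s z - Zf v μbar Δt₁ s z‖
            + ‖Zf v μbar Δt₁ s z - Xf v μbar Δt₁ n₁ z‖ := by
            have := norm_add₃_le (a := Xf v μbar Δt₂ n₂ z - Zf v μbar Δt₂ s z)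
              (b := Zf v μbar Δt₂ s z - Zf v μbar Δt₁ s z)
              (c := Zf v μbar Δt₁ s z - Xf v μbar Δt₁ n₁ z)
            convert this using 2
            · rfl
            · abel
        _ ≤ D s + ε := by
            have b1 := hfl2 z
            have b2 : ‖Zf v μbar Δt₂ s z - Zf v μbar Δt₁ s z‖ ≤ D s := by
              rw [norm_sub_rev]; exact hDle s z
            have b3 : ‖Zf v μbar Δt₁ s z - Xf v μbar Δt₁ n₁ z‖ ≤ V * Δt₁ := by
              rw [norm_sub_rev]; exact hfl1 z
            rw [hε]
            linarith [b1, b2, b3]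
    have hW1b : W1 (sdScheme v μbar Δt₁ n₁) (sdScheme v μbar Δt₂ n₂) ≤ D s + ε := by
      rw [(sd_props_s6 hA hμ1 h1 n₁).2.1, (sd_props_s6 hA hμ1 h2 n₂).2.1]
      exact W1_map_le _ _ (sd_props_s6 hA hμ1 h1 n₁).2.2.1 (sd_props_s6 hA hμ1 h2 n₂).2.2.1
        _ _ (sd_props_s6 hA hμ1 h1 n₁).2.2.2.1 (sd_props_s6 hA hμ1 h2 n₂).2.2.2.1
        _ hpt
    have key := hA.2.2.2.1 (sdScheme v μbar Δt₁ n₁) (sdScheme v μbar Δt₂ n₂)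
      (sd_props_s6 hA hμ1 h1 n₁).1 (sd_props_s6 hA hμ1 h2 n₂).1
      (Xf v μbar Δt₁ n₁ x) (Xf v μbar Δt₂ n₂ x)
    rw [norm_sub_rev]
    refine le_trans key ?_
    have := hpt x
    nlinarith [hW1b, hpt x]
  -- integral inequality
  have hii : ∀ t ∈ Set.Icc (0:ℝ) T, D t + ε ≤ ε + (2*L) * ∫ s in (0:ℝ)..t, (D s + ε) := by
    intro t ht
    have hstep : D t ≤ ∫ s in (0:ℝ)..t, (2*L*(D s + ε)) := by
      refine ciSup_le fun x => ?_
      have hdiff : Zf v μbar Δt₁ t x - Zf v μbar Δt₂ t x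
          = ∫ s in (0:ℝ)..t, (wvel v μbar Δt₁ s x - wvel v μbar Δt₂ s x) := by
        rw [Zf, Zf, intervalIntegral.integral_sub (wvel_intervalIntegrable hA hμ1 h1 x 0 t)
          (wvel_intervalIntegrable hA hμ1 h2 x 0 t)]
        abel
      rw [hdiff]
      refine le_trans (intervalIntegral.norm_integral_le_integral_norm ht.1) ?_
      refine intervalIntegral.integral_mono_on ht.1 ?_ ?_ ?_
      · constructor <;>
        · refine Integrable.mono' (integrable_const (2*V))
            (((wvel_meas h1 x).sub (wvel_meas h2 x)).norm.aestronglyMeasurable)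
            (Filter.Eventually.of_forall fun s => ?_)
          have := norm_sub_le (wvel v μbar Δt₁ s x) (wvel v μbar Δt₂ s x)
          have b1 := wvel_bound hA hμ1 h1 s x
          have b2 := wvel_bound hA hμ1 h2 s x
          simp only [norm_norm]
          linarith
      · exact (continuous_const.mul (hDcont.add continuous_const)).intervalIntegrable _ _
      · intro s hs
        exact hw s hs.1 x
    rw [intervalIntegral.integral_const_mul] at hstep
    linarith
  -- Gronwall
  have hgron := gronwall (f := fun t => D t + ε) (A := ε) (B := 2*L) (M := 2*V*T + ε)
    hεpos.le (by positivity) (by positivity)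
    ((hDcont.add continuous_const).continuousOn)
    (fun t ht => by
      show D t + ε ≤ 2*V*T + ε
      have hb := hDbd t
      rw [abs_of_nonneg ht.1] at hb
      have h2 : 2*V*t ≤ 2*V*T := mul_le_mul_of_nonneg_left ht.2 (by positivity)
      linarith)
    hii
  intro t ht x
  have hgront : D t + ε ≤ ε * Real.exp (2*L*t) := hgron t ht
  have hexp : Real.exp (2*L*t) ≤ Real.exp (2*L*T) :=
    Real.exp_le_exp.mpr (by nlinarith [ht.2, mul_nonneg hL.le (sub_nonneg.mpr ht.2)])
  have hfin : D t ≤ ε * Real.exp (2*L*T) := by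
    have := mul_le_mul_of_nonneg_left hexp hεpos.le
    linarith
  exact le_trans (hDle t x) hfin

end Compare


/-- Proposition 1 of the paper.
For the semi-discrete scheme with a velocity field satisfying Assumption A and
`μ̄ ∈ P₁ ∩ P₂`, there exist a `W₁`-continuous curve `μ : [0,T] → P₁(ℝ^d)` and a
subsequence `(M^{k_j})` of the interpolated curves with
`lim_j sup_{t∈[0,T]} W₁(M_t^{k_j}, μ_t) = 0`. -/
theorem interpolated_curves_compactness
    (d : ℕ) (hd : 1 ≤ d)
    (v : Measure (Euc d) → Euc d → Euc d) (V L : ℝ)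
    (hA : AssumptionA v V L)
    (T : ℝ) (hT : 0 < T)
    (μbar : Measure (Euc d)) (hμbar : P1 μbar ∧ P2 μbar)
    (Δt : ℕ → ℝ) (N : ℕ → ℕ)
    (hΔtpos : ∀ k, 0 < Δt k) (hNT : ∀ k, (N k : ℝ) * Δt k = T)
    (hΔt0 : Tendsto Δt atTop (nhds 0)) :
    ∃ μ : ℝ → Measure (Euc d),
      (∀ t ∈ Set.Icc (0:ℝ) T, P1 (μ t)) ∧ W1ContinuousOn μ T ∧
      ∃ ψ : ℕ → ℕ, StrictMono ψ ∧
        UnifW1Tendsto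
          (fun j t => interp (sdScheme v μbar (Δt (ψ j))) (Δt (ψ j)) t) μ T := by
  obtain ⟨hμP1, hμP2⟩ := hμbar
  have hV := hA.1
  have hL := hA.2.1
  have hprob : IsProbabilityMeasure μbar := hμP1.1
  set K := Real.exp (2*L*T) with hK
  have hKpos : 0 < K := Real.exp_pos _
  have hWmap : ∀ (f g : Euc d → Euc d), Continuous f → Continuous g →
      ∀ (Bf Bg : ℝ), (∀ x, ‖f x - x‖ ≤ Bf) → (∀ x, ‖g x - x‖ ≤ Bg) →
      ∀ (C : ℝ), (∀ x, ‖g x - f x‖ ≤ C) → W1 (μbar.map f) (μbar.map g) ≤ C :=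
    fun f g hf hg Bf Bg hBf hBg C h => W1_map_le μbar hμP1.2 hf hg hBf hBg h
  have hcomp : ∀ k m : ℕ, ∀ t ∈ Set.Icc (0:ℝ) T, ∀ x : Euc d,
      ‖Zf v μbar (Δt k) t x - Zf v μbar (Δt m) t x‖ ≤ V * (Δt k + Δt m) * K :=
    fun k m => Zf_compare hA hμP1 hWmap (hΔtpos k) (hΔtpos m) hT
  -- Cauchy property and limit flow
  have hcauchy : ∀ t ∈ Set.Icc (0:ℝ) T, ∀ x : Euc d,
      CauchySeq (fun k => Zf v μbar (Δt k) t x) := by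
    intro t ht x
    rw [Metric.cauchySeq_iff']
    intro ε hε
    have hε' : 0 < ε / (2 * V * K + 1) := by positivity
    obtain ⟨N, hN⟩ := (Metric.tendsto_atTop.mp hΔt0) _ hε'
    refine ⟨N, fun n hn => ?_⟩
    have b1 : |Δt n| < ε / (2 * V * K + 1) := by
      have := hN n hn; rwa [Real.dist_eq, sub_zero] at this
    have b2 : |Δt N| < ε / (2 * V * K + 1) := by
      have := hN N le_rfl; rwa [Real.dist_eq, sub_zero] at this
    rw [abs_of_pos (hΔtpos n)] at b1
    rw [abs_of_pos (hΔtpos N)] at b2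
    rw [dist_eq_norm]
    calc ‖Zf v μbar (Δt n) t x - Zf v μbar (Δt N) t x‖
        ≤ V * (Δt n + Δt N) * K := hcomp n N t ht x
      _ < ε := by
          have hc2 : (0:ℝ) < 2 * V * K + 1 := by positivity
          have hVK : (0:ℝ) < V * K := by positivity
          have hsum : Δt n + Δt N < 2 * (ε / (2 * V * K + 1)) := by linarith
          have heq : (V * K) * (2 * (ε / (2 * V * K + 1))) = ε - ε / (2 * V * K + 1) := by
            field_simp
            ring
          have hqpos : 0 < ε / (2 * V * K + 1) := by positivity
          calc V * (Δt n + Δt N) * K = (V * K) * (Δt n + Δt N) := by ring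
            _ < (V * K) * (2 * (ε / (2 * V * K + 1))) := by
                exact mul_lt_mul_of_pos_left hsum hVK
            _ = ε - ε / (2 * V * K + 1) := heq
            _ < ε := by linarith
  set X : ℝ → Euc d → Euc d := fun t x => limUnder atTop (fun k => Zf v μbar (Δt k) t x)
    with hXdef
  have hXlim : ∀ t ∈ Set.Icc (0:ℝ) T, ∀ x : Euc d,
      Tendsto (fun k => Zf v μbar (Δt k) t x) atTop (nhds (X t x)) :=
    fun t ht x => (hcauchy t ht x).tendsto_limUnder
  have hXZ' : ∀ t ∈ Set.Icc (0:ℝ) T, ∀ (k : ℕ) (x : Euc d),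
      ‖X t x - Zf v μbar (Δt k) t x‖ ≤ V * Δt k * K := by
    intro t ht k x
    have h1 : Tendsto (fun m => ‖Zf v μbar (Δt m) t x - Zf v μbar (Δt k) t x‖)
        atTop (nhds (‖X t x - Zf v μbar (Δt k) t x‖)) :=
      ((hXlim t ht x).sub tendsto_const_nhds).norm
    have h2 : Tendsto (fun m => V * (Δt m + Δt k) * K) atTop
        (nhds (V * (0 + Δt k) * K)) :=
      (((hΔt0.add_const (Δt k)).const_mul V).mul_const K)
    have h3 := le_of_tendsto_of_tendsto' h1 h2 (fun m => hcomp m k t ht x)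
    calc ‖X t x - Zf v μbar (Δt k) t x‖ ≤ V * (0 + Δt k) * K := h3
      _ = V * Δt k * K := by ring
  have hXx : ∀ t ∈ Set.Icc (0:ℝ) T, ∀ x : Euc d, ‖X t x - x‖ ≤ V * T := by
    intro t ht x
    refine le_of_tendsto' ((hXlim t ht x).sub_const x).norm fun k => ?_
    have := Zf_dist hA hμP1 (hΔtpos k) x 0 t
    rw [Zf_zero, sub_zero, abs_of_nonneg ht.1] at this
    refine le_trans this ?_
    exact mul_le_mul_of_nonneg_left ht.2 hV.le
  have hXt : ∀ s ∈ Set.Icc (0:ℝ) T, ∀ t ∈ Set.Icc (0:ℝ) T, ∀ x : Euc d,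
      ‖X t x - X s x‖ ≤ V * |t - s| := by
    intro s hs t ht x
    refine le_of_tendsto' (((hXlim t ht x).sub (hXlim s hs x)).norm) fun k => ?_
    exact Zf_dist hA hμP1 (hΔtpos k) x s t
  have hXcont : ∀ t ∈ Set.Icc (0:ℝ) T, Continuous (X t) := by
    intro t ht
    set C := 1 + T * L * Real.exp (L * T) with hC
    have hCnn : 0 ≤ C := by positivity
    refine cont_of_norm_lip hCnn fun x y => ?_
    refine le_of_tendsto' (((hXlim t ht x).sub (hXlim t ht y)).norm) fun k => ?_
    refine le_trans (Zf_x_lip hA hμP1 (hΔtpos k) ht.1 x y) ?_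
    have h1 : t * L * Real.exp (L * t) ≤ T * L * Real.exp (L * T) := by
      have e1 : Real.exp (L * t) ≤ Real.exp (L * T) :=
        Real.exp_le_exp.mpr (mul_le_mul_of_nonneg_left ht.2 hL.le)
      have p1 : t * L ≤ T * L := mul_le_mul_of_nonneg_right ht.2 hL.le
      have p2 : t * L * Real.exp (L * t) ≤ T * L * Real.exp (L * t) :=
        mul_le_mul_of_nonneg_right p1 (Real.exp_pos _).le
      have p3 : T * L * Real.exp (L * t) ≤ T * L * Real.exp (L * T) :=
        mul_le_mul_of_nonneg_left e1 (mul_nonneg hT.le hL.le)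
      linarith
    have : (1 + t * L * Real.exp (L * t)) ≤ C := by rw [hC]; linarith
    exact mul_le_mul_of_nonneg_right this (norm_nonneg _)
  have hμtP1 : ∀ t ∈ Set.Icc (0:ℝ) T, P1 (μbar.map (X t)) := by
    intro t ht
    constructor
    · exact Measure.isProbabilityMeasure_map (hXcont t ht).measurable.aemeasurable
    · rw [integrable_map_measure continuous_norm.aestronglyMeasurable
        (hXcont t ht).measurable.aemeasurable]
      refine Integrable.mono' (g := fun x => ‖x‖ + V * T)
        (hμP1.2.add (integrable_const _))
        (continuous_norm.comp (hXcont t ht)).aestronglyMeasurable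
        (Filter.Eventually.of_forall fun x => ?_)
      have h2 := hXx t ht x
      have := norm_sub_norm_le (X t x) x
      simp only [Function.comp, Real.norm_eq_abs, abs_of_nonneg (norm_nonneg _)]
      linarith
  refine ⟨fun t => μbar.map (X t), hμtP1, ?_, id, strictMono_id, ?_⟩
  · -- W1-continuity
    intro t ht ε hε
    refine ⟨ε / (V + 1), div_pos hε (by linarith), fun s hs hst => ?_⟩
    have hVle : W1 (μbar.map (X s)) (μbar.map (X t)) ≤ V * |t - s| :=
      hWmap (X s) (X t) (hXcont s hs) (hXcont t ht) (V*T) (V*T)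
        (hXx s hs) (hXx t ht) (V * |t - s|) (hXt s hs t ht)
    refine lt_of_le_of_lt hVle ?_
    have h1 : |t - s| < ε / (V + 1) := by rwa [abs_sub_comm]
    have h2 : V * |t - s| ≤ V * (ε / (V + 1)) :=
      mul_le_mul_of_nonneg_left h1.le hV.le
    have h3 : V * (ε / (V + 1)) < ε := by
      rw [mul_div_assoc']
      rw [div_lt_iff₀ (by positivity)]
      nlinarith
    linarith
  · -- uniform convergence
    intro ε hε
    set c := V + V * K with hc
    have hcpos : 0 < c := by positivity
    obtain ⟨K₀, hK₀⟩ := (Metric.tendsto_atTop.mp hΔt0) (ε / (c + 1)) (by positivity)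
    refine ⟨K₀, fun k hk t ht => ?_⟩
    show W1 (interp (sdScheme v μbar (Δt k)) (Δt k) t) (μbar.map (X t)) < ε
    set h := Δt k with hh
    have hpos : 0 < h := hΔtpos k
    have hsmall : h < ε / (c + 1) := by
      have := hK₀ k hk
      rw [Real.dist_eq, sub_zero, abs_of_pos hpos] at this
      exact this
    set n := ⌊t / h⌋₊ with hn
    have hnh : (n : ℝ) * h ≤ t := by
      rw [← le_div_iff₀ hpos]
      exact Nat.floor_le (div_nonneg ht.1 hpos.le)
    have hnh2 : t < ((n : ℝ) + 1) * h := by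
      rw [← div_lt_iff₀ hpos]
      exact Nat.lt_floor_add_one _
    -- bound on W1 between scheme measures and limit
    have hWj : ∀ j : ℕ, |(j : ℝ) * h - t| ≤ h →
        W1 (sdScheme v μbar h j) (μbar.map (X t)) ≤ c * h := by
      intro j hj
      rw [(sd_props_s6 hA hμP1 hpos j).2.1]
      refine hWmap _ _ (sd_props_s6 hA hμP1 hpos j).2.2.1 (hXcont t ht)
        ((j : ℝ) * h * V) (V * T) (sd_props_s6 hA hμP1 hpos j).2.2.2.1 (hXx t ht)
        (c * h) fun x => ?_
      have e1 : ‖X t x - Zf v μbar h t x‖ ≤ V * h * K := hXZ' t ht k x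
      have e2 : ‖Zf v μbar h t x - Xf v μbar h j x‖ ≤ V * h := by
        rw [← Zf_grid hA hμP1 hpos x j]
        refine le_trans (Zf_dist hA hμP1 hpos x _ _) ?_
        rw [abs_sub_comm]
        exact mul_le_mul_of_nonneg_left hj hV.le
      calc ‖X t x - Xf v μbar h j x‖
          ≤ ‖X t x - Zf v μbar h t x‖ + ‖Zf v μbar h t x - Xf v μbar h j x‖ := by
            have := norm_add_le (X t x - Zf v μbar h t x) (Zf v μbar h t x - Xf v μbar h j x)
            convert this using 2
            · rfl
            · abel
        _ ≤ V * h * K + V * h := by linarith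
        _ = c * h := by rw [hc]; ring
    have hb1 : |(n : ℝ) * h - t| ≤ h := by
      rw [abs_of_nonpos (by linarith)]
      push_cast at hnh2
      linarith
    have hb2 : |((n + 1 : ℕ) : ℝ) * h - t| ≤ h := by
      rw [abs_of_nonneg (by push_cast; linarith)]
      push_cast
      linarith
    have hW1 := hWj n hb1
    have hW2 := hWj (n+1) hb2
    -- convexity
    have hθ0 : 0 ≤ (t - (n : ℝ) * h) / h := div_nonneg (by linarith) hpos.le
    have hθ1 : (t - (n : ℝ) * h) / h ≤ 1 := by
      rw [div_le_one hpos]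
      push_cast at hnh2
      linarith
    have hconv := W1_convex (sd_props_s6 hA hμP1 hpos n).1 (sd_props_s6 hA hμP1 hpos (n+1)).1
      (hμtP1 t ht) (a := 1 - (t - (n : ℝ) * h) / h) (b := (t - (n : ℝ) * h) / h)
      (by linarith) hθ0 (by ring)
    rw [interp, ← hn]
    have hmid : (1 - (t - (n : ℝ) * h) / h) * W1 (sdScheme v μbar h n) (μbar.map (X t))
        + ((t - (n : ℝ) * h) / h) * W1 (sdScheme v μbar h (n+1)) (μbar.map (X t))
        ≤ c * h := by
      have p1 : (1 - (t - (n : ℝ) * h) / h) * W1 (sdScheme v μbar h n) (μbar.map (X t))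
          ≤ (1 - (t - (n : ℝ) * h) / h) * (c * h) :=
        mul_le_mul_of_nonneg_left hW1 (by linarith)
      have p2 : ((t - (n : ℝ) * h) / h) * W1 (sdScheme v μbar h (n+1)) (μbar.map (X t))
          ≤ ((t - (n : ℝ) * h) / h) * (c * h) :=
        mul_le_mul_of_nonneg_left hW2 hθ0
      nlinarith [p1, p2]
    have hfin : c * h < ε := by
      clear_value K c h
      have h1 : (c + 1) * h < (c + 1) * (ε / (c + 1)) :=
        mul_lt_mul_of_pos_left hsmall (by linarith)
      have h2 : (c + 1) * (ε / (c + 1)) = ε := by field_simp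
      have h3 : c * h + h = (c + 1) * h := by ring
      linarith
    exact lt_of_le_of_lt (le_trans hconv hmid) hfin

end
end

section
/- For the semi-discrete scheme with velocity field satisfying Assumption A, for every test function φ ∈ C_c^∞(ℝ^d), setting H = ‖D²φ‖_∞, L' = HV + L‖∇φ‖_∞ and C = max{HV²/2, L', 2‖∇φ‖_∞}, the interpolated curves satisfy, for all t ∈ [0,T] and all k ≥ 0: |∫φ dM_t^k − ∫φ dμ̄ − ∫₀ᵗ ∫ v[M_τ^k]·∇φ dM_τ^k dτ| ≤ C(1+2V)TΔt_k. In particular this quantity tends to 0 as k → ∞. -/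
open MeasureTheory Metric Filter

noncomputable section

namespace SDAux


variable {d : ℕ}

lemma W1_self (μ : Measure (Euc d)) : W1 μ μ = 0 := by
  unfold W1; simp

lemma integrable_of_bound {μ : Measure (Euc d)} [IsFiniteMeasure μ] {f : Euc d → ℝ}
    (hf : Continuous f) (B : ℝ) (hB : ∀ x, |f x| ≤ B) : Integrable f μ :=
  ⟨hf.aestronglyMeasurable, HasFiniteIntegral.of_bounded (C := B)
    (Filter.Eventually.of_forall (by simpa using hB))⟩

-- gradient facts
variable {φ : Euc d → ℝ}

lemma grad_apply (hφ : ContDiff ℝ (⊤ : ℕ∞) φ) (x y : Euc d) :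
    (inner ℝ (gradient φ x) y : ℝ) = fderiv ℝ φ x y := by
  rw [gradient]; exact InnerProductSpace.toDual_symm_apply

lemma grad_sub_norm (x y : Euc d) :
    ‖gradient φ y - gradient φ x‖ = ‖fderiv ℝ φ y - fderiv ℝ φ x‖ := by
  rw [gradient, gradient, ← map_sub]
  exact LinearIsometryEquiv.norm_map _ _

lemma grad_cont (hφ : ContDiff ℝ (⊤ : ℕ∞) φ) : Continuous (gradient φ) :=
  (InnerProductSpace.toDual ℝ (Euc d)).symm.continuous.comp (hφ.continuous_fderiv (by simp))

lemma grad_compact (hφc : HasCompactSupport φ) : HasCompactSupport (gradient φ) :=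
  (hφc.fderiv ℝ).comp_left (g := (InnerProductSpace.toDual ℝ (Euc d)).symm) (map_zero _)


variable {d : ℕ} {φ : Euc d → ℝ}

lemma fderiv2_bound (hφ : ContDiff ℝ (⊤ : ℕ∞) φ) {H : ℝ} (hH0 : 0 ≤ H)
    (hHb : ∀ x, ‖iteratedFDeriv ℝ 2 φ x‖ ≤ H) (z : Euc d) :
    ‖fderiv ℝ (fderiv ℝ φ) z‖ ≤ H := by
  refine ContinuousLinearMap.opNorm_le_bound _ hH0 (fun a => ?_)
  refine ContinuousLinearMap.opNorm_le_bound _ (by positivity) (fun b => ?_)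
  have h2 : fderiv ℝ (fderiv ℝ φ) z a b = iteratedFDeriv ℝ 2 φ z ![a, b] := by
    rw [iteratedFDeriv_two_apply]; simp
  rw [h2]
  calc ‖iteratedFDeriv ℝ 2 φ z ![a, b]‖ ≤ ‖iteratedFDeriv ℝ 2 φ z‖ * ∏ i, ‖(![a,b]) i‖ :=
        ContinuousMultilinearMap.le_opNorm _ _
    _ ≤ H * (‖a‖ * ‖b‖) := by
        rw [Fin.prod_univ_two]
        have := hHb z
        have h1 : (0:ℝ) ≤ ‖a‖ * ‖b‖ := by positivity
        simpa using mul_le_mul_of_nonneg_right this h1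
    _ = H * ‖a‖ * ‖b‖ := by ring

lemma fderiv_lip (hφ : ContDiff ℝ (⊤ : ℕ∞) φ) {H : ℝ} (hH0 : 0 ≤ H)
    (hHb : ∀ x, ‖iteratedFDeriv ℝ 2 φ x‖ ≤ H) (x y : Euc d) :
    ‖fderiv ℝ φ y - fderiv ℝ φ x‖ ≤ H * ‖y - x‖ := by
  have hdiff : ContDiff ℝ (⊤ : ℕ∞) (fderiv ℝ φ) := hφ.fderiv_right (by simp)
  exact Convex.norm_image_sub_le_of_norm_fderiv_le
    (fun z _ => (hdiff.differentiable (by simp)).differentiableAt)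
    (fun z _ => fderiv2_bound hφ hH0 hHb z) convex_univ trivial trivial

lemma taylor_half (hφ : ContDiff ℝ (⊤ : ℕ∞) φ) {H : ℝ} (hH0 : 0 ≤ H)
    (hHb : ∀ x, ‖iteratedFDeriv ℝ 2 φ x‖ ≤ H) (x h : Euc d) :
    |φ (x + h) - φ x - fderiv ℝ φ x h| ≤ H / 2 * ‖h‖ ^ 2 := by
  have hder : ∀ s : ℝ, HasDerivAt (fun s : ℝ => φ (x + s • h))
      (fderiv ℝ φ (x + s • h) h) s := by
    intro s
    have hline : HasDerivAt (fun s : ℝ => x + s • h) h s := by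
      simpa using ((hasDerivAt_id s).smul_const h).const_add x
    exact ((hφ.differentiable (by simp) (x + s • h)).hasFDerivAt.comp_hasDerivAt s hline)
  have hcont : Continuous (fun s : ℝ => fderiv ℝ φ (x + s • h) h) := by
    apply Continuous.clm_apply _ continuous_const
    exact (hφ.continuous_fderiv (by simp)).comp (by continuity)
  have hFTC : φ (x + h) - φ x = ∫ s in (0:ℝ)..1, fderiv ℝ φ (x + s • h) h := by
    have := intervalIntegral.integral_eq_sub_of_hasDerivAt (f := fun s : ℝ => φ (x + s • h))
      (fun s _ => hder s) (hcont.intervalIntegrable 0 1)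
    rw [this]; norm_num
  have hconst : fderiv ℝ φ x h = ∫ s in (0:ℝ)..1, fderiv ℝ φ x h := by
    simp
  have heq : φ (x + h) - φ x - fderiv ℝ φ x h
      = ∫ s in (0:ℝ)..1, (fderiv ℝ φ (x + s • h) h - fderiv ℝ φ x h) := by
    rw [intervalIntegral.integral_sub (hcont.intervalIntegrable 0 1)
      (intervalIntegrable_const), ← hFTC, ← hconst]
  have hbound : ∀ s ∈ Set.uIoc (0:ℝ) 1,
      ‖fderiv ℝ φ (x + s • h) h - fderiv ℝ φ x h‖ ≤ H * ‖h‖ ^ 2 * s := by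
    intro s hs
    rw [Set.uIoc_of_le zero_le_one] at hs
    have h1 : fderiv ℝ φ (x + s • h) h - fderiv ℝ φ x h
        = (fderiv ℝ φ (x + s • h) - fderiv ℝ φ x) h := by simp
    rw [h1]
    calc ‖(fderiv ℝ φ (x + s • h) - fderiv ℝ φ x) h‖
        ≤ ‖fderiv ℝ φ (x + s • h) - fderiv ℝ φ x‖ * ‖h‖ := ContinuousLinearMap.le_opNorm _ _
      _ ≤ (H * ‖x + s • h - x‖) * ‖h‖ := by
          have := fderiv_lip hφ hH0 hHb x (x + s • h)
          exact mul_le_mul_of_nonneg_right this (norm_nonneg _)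
      _ = H * ‖h‖ ^ 2 * |s| := by
          simp [add_sub_cancel_left, norm_smul]; ring
      _ = H * ‖h‖ ^ 2 * s := by rw [abs_of_pos hs.1]
  have : ‖∫ s in (0:ℝ)..1, (fderiv ℝ φ (x + s • h) h - fderiv ℝ φ x h)‖
      ≤ |∫ s in (0:ℝ)..1, H * ‖h‖ ^ 2 * s| := by
    apply intervalIntegral.norm_integral_le_abs_of_norm_le
    · exact ((ae_restrict_iff' measurableSet_uIoc).2 (Filter.Eventually.of_forall hbound))
    · exact (Continuous.intervalIntegrable (by continuity) 0 1)
  rw [heq]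
  have hval : ∫ s in (0:ℝ)..1, H * ‖h‖ ^ 2 * s = H * ‖h‖ ^ 2 / 2 := by
    rw [intervalIntegral.integral_const_mul, integral_id]; ring
  calc |∫ s in (0:ℝ)..1, (fderiv ℝ φ (x + s • h) h - fderiv ℝ φ x h)|
      ≤ |∫ s in (0:ℝ)..1, H * ‖h‖ ^ 2 * s| := this
    _ = H / 2 * ‖h‖ ^ 2 := by rw [hval]; rw [abs_of_nonneg (by positivity)]; ring



lemma v_lip (hA : AssumptionA v V L) {μ : Measure (Euc d)} (hμ : P1 μ) (x y : Euc d) :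
    ‖v μ y - v μ x‖ ≤ L * ‖y - x‖ := by
  have := hA.2.2.2.1 μ μ hμ hμ x y
  rwa [W1_self, add_zero] at this

lemma v_cont (hA : AssumptionA v V L) {μ : Measure (Euc d)} (hμ : P1 μ) :
    Continuous (v μ) := by
  have : LipschitzWith (Real.toNNReal L) (v μ) := by
    apply LipschitzWith.of_dist_le_mul
    intro x y
    rw [dist_eq_norm, dist_eq_norm, Real.coe_toNNReal L hA.2.1.le]
    exact v_lip hA hμ y x
  exact this.continuous

lemma flow_cont (hA : AssumptionA v V L) {μ : Measure (Euc d)} (hμ : P1 μ) (Δ : ℝ) :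
    Continuous (fun x => x + Δ • v μ x) :=
  continuous_id.add ((v_cont hA hμ).const_smul Δ)

lemma P1_flowStep (hA : AssumptionA v V L) {μ : Measure (Euc d)} (hμ : P1 μ) {Δ : ℝ}
    (hΔ : 0 ≤ Δ) : P1 (flowStep v Δ μ) := by
  have hμp : IsProbabilityMeasure μ := hμ.1
  have hf := flow_cont hA hμ Δ
  constructor
  · exact Measure.isProbabilityMeasure_map hf.measurable.aemeasurable
  · rw [flowStep, integrable_map_measure continuous_norm.aestronglyMeasurable
      hf.measurable.aemeasurable]
    have hb : Integrable (fun x : Euc d => ‖x‖ + Δ * V) μ := hμ.2.add (integrable_const _)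
    refine hb.mono' ?_ ?_
    · exact (continuous_norm.comp hf).aestronglyMeasurable
    · refine Filter.Eventually.of_forall (fun x => ?_)
      simp only [Function.comp_apply, norm_norm]
      calc ‖x + Δ • v μ x‖ ≤ ‖x‖ + ‖Δ • v μ x‖ := norm_add_le _ _
        _ ≤ ‖x‖ + Δ * V := by
            rw [norm_smul, Real.norm_eq_abs, abs_of_nonneg hΔ]
            have := hA.2.2.1 μ hμ x
            nlinarith [norm_nonneg (v μ x)]

lemma P1_sdScheme (hA : AssumptionA v V L) {μbar : Measure (Euc d)} (hμbar : P1 μbar)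
    {Δ : ℝ} (hΔ : 0 ≤ Δ) : ∀ n, P1 (sdScheme v μbar Δ n)
  | 0 => hμbar
  | n + 1 => P1_flowStep hA (P1_sdScheme hA hμbar hΔ n) hΔ

lemma integral_flowStep (hA : AssumptionA v V L) {μ : Measure (Euc d)} (hμ : P1 μ) (Δ : ℝ)
    {g : Euc d → ℝ} (hg : Continuous g) :
    ∫ x, g x ∂(flowStep v Δ μ) = ∫ x, g (x + Δ • v μ x) ∂μ := by
  rw [flowStep]
  exact integral_map (flow_cont hA hμ Δ).measurable.aemeasurable hg.aestronglyMeasurable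

-- integrability of 1-Lipschitz functions wrt P1 measures
lemma integrable_of_lip {μ : Measure (Euc d)} (hμ : P1 μ) {ψ : Euc d → ℝ}
    (hψ : LipschitzWith 1 ψ) : Integrable ψ μ := by
  have hμp : IsProbabilityMeasure μ := hμ.1
  refine (hμ.2.add (integrable_const (|ψ 0|))).mono' hψ.continuous.aestronglyMeasurable ?_
  refine Filter.Eventually.of_forall (fun x => ?_)
  have h1 := hψ.dist_le_mul x 0
  rw [NNReal.coe_one, one_mul, dist_eq_norm, dist_eq_norm, sub_zero] at h1
  have h2 := abs_sub_abs_le_abs_sub (ψ x) (ψ 0)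
  simp only [Real.norm_eq_abs, Pi.add_apply] at h1 ⊢
  linarith

instance : Nonempty {ψ : Euc d → ℝ // LipschitzWith 1 ψ} :=
  ⟨⟨fun _ => 0, (LipschitzWith.const 0).weaken zero_le_one⟩⟩

lemma W1_flowStep_le (hA : AssumptionA v V L) {μ : Measure (Euc d)} (hμ : P1 μ) {Δ : ℝ}
    (hΔ : 0 ≤ Δ) : W1 μ (flowStep v Δ μ) ≤ V * Δ := by
  have hμp : IsProbabilityMeasure μ := hμ.1
  refine ciSup_le (fun ψ => ?_)
  rw [integral_flowStep hA hμ Δ ψ.2.continuous]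
  have hψint : Integrable ψ.1 μ := integrable_of_lip hμ ψ.2
  have hpt : ∀ x : Euc d, |ψ.1 (x + Δ • v μ x) - ψ.1 x| ≤ V * Δ := by
    intro x
    have h1 := ψ.2.dist_le_mul (x + Δ • v μ x) x
    rw [NNReal.coe_one, one_mul, dist_eq_norm, dist_eq_norm, add_sub_cancel_left] at h1
    have h2 : ‖Δ • v μ x‖ ≤ Δ * V := by
      rw [norm_smul, Real.norm_eq_abs, abs_of_nonneg hΔ]
      have := hA.2.2.1 μ hμ x
      nlinarith [norm_nonneg (v μ x)]
    rw [Real.norm_eq_abs] at h1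
    linarith
  have hint1 : Integrable (fun x => ψ.1 (x + Δ • v μ x)) μ := by
    refine (hψint.abs.add (integrable_const (V * Δ))).mono'
      ((ψ.2.continuous.comp (flow_cont hA hμ Δ)).aestronglyMeasurable) ?_
    refine Filter.Eventually.of_forall (fun x => ?_)
    have := hpt x
    simp only [Real.norm_eq_abs, Pi.add_apply]
    have h3 := abs_sub_abs_le_abs_sub (ψ.1 (x + Δ • v μ x)) (ψ.1 x)
    have h4 := le_abs_self (ψ.1 x)
    have h5 := neg_abs_le (ψ.1 x)
    linarith [abs_sub_abs_le_abs_sub (ψ.1 (x + Δ • v μ x)) (ψ.1 x)]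
  rw [← integral_sub hint1 hψint]
  calc ∫ x, (ψ.1 (x + Δ • v μ x) - ψ.1 x) ∂μ ≤ ∫ _, V * Δ ∂μ := by
        refine integral_mono (hint1.sub hψint) (integrable_const _) (fun x => ?_)
        have := hpt x
        exact (le_abs_self _).trans this
    _ = V * Δ := by simp



/-- convex combination of measures -/
def comb (μ ν : Measure (Euc d)) (θ : ℝ) : Measure (Euc d) :=
  ENNReal.ofReal (1 - θ) • μ + ENNReal.ofReal θ • ν

lemma integral_comb {μ ν : Measure (Euc d)} {θ : ℝ} (h0 : 0 ≤ θ) (h1 : θ ≤ 1)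
    {f : Euc d → ℝ} (hfμ : Integrable f μ) (hfν : Integrable f ν) :
    ∫ x, f x ∂(comb μ ν θ) = (1 - θ) * ∫ x, f x ∂μ + θ * ∫ x, f x ∂ν := by
  rw [comb, integral_add_measure (hfμ.smul_measure ENNReal.ofReal_ne_top)
    (hfν.smul_measure ENNReal.ofReal_ne_top), integral_smul_measure, integral_smul_measure,
    ENNReal.toReal_ofReal (by linarith), ENNReal.toReal_ofReal h0, smul_eq_mul, smul_eq_mul]

lemma interp_eq (μseq : ℕ → Measure (Euc d)) {τ0 : ℝ} (hτ0 : 0 < τ0) (n : ℕ) {t : ℝ}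
    (h1 : (n : ℝ) * τ0 ≤ t) (h2 : t ≤ ((n : ℝ) + 1) * τ0) :
    interp μseq τ0 t = comb (μseq n) (μseq (n + 1)) ((t - n * τ0) / τ0) := by
  rcases eq_or_lt_of_le h2 with he | hlt
  · subst he
    have hdiv : (((n : ℝ) + 1) * τ0) / τ0 = ((n + 1 : ℕ) : ℝ) := by
      push_cast; field_simp
    have hfl : ⌊(((n : ℝ) + 1) * τ0) / τ0⌋₊ = n + 1 := by
      rw [hdiv, Nat.floor_natCast]
    have hθ : (((n : ℝ) + 1) * τ0 - n * τ0) / τ0 = 1 := by field_simp; ring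
    rw [interp, hfl, comb, hθ]
    push_cast
    have hz : (((n : ℝ) + 1) * τ0 - (n + 1) * τ0) / τ0 = 0 := by rw [sub_self, zero_div]
    rw [hz]
    simp [ENNReal.ofReal_one, ENNReal.ofReal_zero]
  · have hge : 0 ≤ t / τ0 := by
      apply div_nonneg _ hτ0.le
      have : (0:ℝ) ≤ (n : ℝ) * τ0 := by positivity
      linarith
    have hfl : ⌊t / τ0⌋₊ = n := by
      rw [Nat.floor_eq_iff hge]
      constructor
      · rw [le_div_iff₀ hτ0]; linarith
      · rw [div_lt_iff₀ hτ0]; push_cast; linarith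
    rw [interp, hfl, comb]

end SDAux


namespace SDAux

set_option maxHeartbeats 1000000 in
lemma master {d : ℕ} {v : Measure (Euc d) → Euc d → Euc d} {V L : ℝ}
    (hA : AssumptionA v V L) {μbar : Measure (Euc d)} (hμbar : P1 μbar)
    {τ0 : ℝ} (hτ0 : 0 < τ0) {φ : Euc d → ℝ} (hφ : ContDiff ℝ (⊤ : ℕ∞) φ)
    (hφc : HasCompactSupport φ) {H Hg L' C : ℝ}
    (hH0 : 0 ≤ H) (hHb : ∀ x, ‖iteratedFDeriv ℝ 2 φ x‖ ≤ H)
    (hHg0 : 0 ≤ Hg) (hHgb : ∀ x, ‖gradient φ x‖ ≤ Hg)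
    (hL' : L' = H * V + L * Hg)
    (hC1 : H * V ^ 2 / 2 ≤ C) (hC2 : L' ≤ C) :
    ∀ t : ℝ, 0 ≤ t →
      |(∫ x, φ x ∂(interp (sdScheme v μbar τ0) τ0 t)) - (∫ x, φ x ∂μbar) -
          ∫ τ in (0:ℝ)..t,
            ∫ x, (inner ℝ (v (interp (sdScheme v μbar τ0) τ0 τ) x)
              (gradient φ x) : ℝ) ∂(interp (sdScheme v μbar τ0) τ0 τ)| ≤
        C * (1 + 2 * V) * τ0 * t := by
  have hV : 0 < V := hA.1
  have hLpos : 0 < L := hA.2.1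
  set sch : ℕ → Measure (Euc d) := sdScheme v μbar τ0 with hsch
  have hP1 : ∀ n, P1 (sch n) := P1_sdScheme hA hμbar hτ0.le
  set g : Measure (Euc d) → Euc d → ℝ :=
    fun ν x => (inner ℝ (v ν x) (gradient φ x) : ℝ) with hg
  set A : ℝ → ℝ := fun τ => ∫ x, g (interp sch τ0 τ) x ∂(interp sch τ0 τ) with hA'
  set F : ℝ → ℝ := fun t => ∫ x, φ x ∂(interp sch τ0 t) with hF
  set Pn : ℕ → ℝ := fun n => ∫ x, φ x ∂(sch n) with hPn
  set B : ℕ → ℕ → ℝ := fun i j => ∫ x, g (sch i) x ∂(sch j) with hB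
  -- basic facts
  have hφint : ∀ n, Integrable φ (sch n) := fun n => by
    haveI := (hP1 n).1
    exact hφ.continuous.integrable_of_hasCompactSupport hφc
  have hgc : ∀ n, Continuous (g (sch n)) := fun n =>
    (v_cont hA (hP1 n)).inner (grad_cont hφ)
  have hvb : ∀ n x, ‖v (sch n) x‖ ≤ V := fun n x => hA.2.2.1 _ (hP1 n) x
  have hgb : ∀ n x, |g (sch n) x| ≤ V * Hg := by
    intro n x
    calc |g (sch n) x| ≤ ‖v (sch n) x‖ * ‖gradient φ x‖ := abs_real_inner_le_norm _ _
      _ ≤ V * Hg := by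
          have h1 := hvb n x
          have h2 := hHgb x
          nlinarith [norm_nonneg (v (sch n) x), norm_nonneg (gradient φ x)]
  have hgint : ∀ n m, Integrable (g (sch n)) (sch m) := fun n m => by
    haveI := (hP1 m).1
    exact integrable_of_bound (hgc n) (V * Hg) (hgb n)
  have hgradlip : ∀ x y : Euc d, ‖gradient φ y - gradient φ x‖ ≤ H * ‖y - x‖ := by
    intro x y; rw [grad_sub_norm]; exact fderiv_lip hφ hH0 hHb x y
  have hglip : ∀ n (x y : Euc d), |g (sch n) y - g (sch n) x| ≤ L' * ‖y - x‖ := by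
    intro n x y
    have hexp : g (sch n) y - g (sch n) x
        = (inner ℝ (v (sch n) y - v (sch n) x) (gradient φ y) : ℝ)
          + (inner ℝ (v (sch n) x) (gradient φ y - gradient φ x) : ℝ) := by
      simp only [hg, inner_sub_left, inner_sub_right]; ring
    rw [hexp]
    have h1 : |(inner ℝ (v (sch n) y - v (sch n) x) (gradient φ y) : ℝ)|
        ≤ (L * ‖y - x‖) * Hg := by
      calc _ ≤ ‖v (sch n) y - v (sch n) x‖ * ‖gradient φ y‖ := abs_real_inner_le_norm _ _
        _ ≤ (L * ‖y - x‖) * Hg := by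
            have h3 := v_lip hA (hP1 n) x y
            have h4 := hHgb y
            nlinarith [norm_nonneg (v (sch n) y - v (sch n) x), norm_nonneg (gradient φ y),
              norm_nonneg (y - x)]
    have h2 : |(inner ℝ (v (sch n) x) (gradient φ y - gradient φ x) : ℝ)|
        ≤ V * (H * ‖y - x‖) := by
      calc _ ≤ ‖v (sch n) x‖ * ‖gradient φ y - gradient φ x‖ := abs_real_inner_le_norm _ _
        _ ≤ V * (H * ‖y - x‖) := by
            have h3 := hvb n x
            have h4 := hgradlip x y
            nlinarith [norm_nonneg (v (sch n) x), norm_nonneg (gradient φ y - gradient φ x),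
              norm_nonneg (y - x)]
    calc |(inner ℝ (v (sch n) y - v (sch n) x) (gradient φ y) : ℝ)
          + (inner ℝ (v (sch n) x) (gradient φ y - gradient φ x) : ℝ)|
        ≤ _ + _ := abs_add_le _ _
      _ ≤ (L * ‖y - x‖) * Hg + V * (H * ‖y - x‖) := add_le_add h1 h2
      _ = L' * ‖y - x‖ := by rw [hL']; ring
  have hL'0 : 0 ≤ L' := by
    rw [hL']
    have : 0 ≤ H * V := mul_nonneg hH0 hV.le
    have : 0 ≤ L * Hg := mul_nonneg hLpos.le hHg0
    linarith
  have habs_int : ∀ (m : ℕ) (f : Euc d → ℝ) (c : ℝ), (∀ x, |f x| ≤ c) →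
      |∫ x, f x ∂(sch m)| ≤ c := by
    intro m f c hc
    haveI := (hP1 m).1
    have := norm_integral_le_of_norm_le_const (μ := sch m) (f := f) (C := c)
      (Filter.Eventually.of_forall (by simpa using hc))
    simpa [measure_univ] using this
  have hsch_succ : ∀ n, sch (n + 1) = flowStep v τ0 (sch n) := fun n => rfl
  have hpush : ∀ n (f : Euc d → ℝ), Continuous f →
      ∫ x, f x ∂(sch (n + 1)) = ∫ x, f (x + τ0 • v (sch n) x) ∂(sch n) := by
    intro n f hf
    rw [hsch_succ n]
    exact integral_flowStep hA (hP1 n) τ0 hf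
  have hflownorm : ∀ n (x : Euc d), ‖τ0 • v (sch n) x‖ ≤ V * τ0 := by
    intro n x
    rw [norm_smul, Real.norm_eq_abs, abs_of_pos hτ0]
    have := hvb n x
    nlinarith [norm_nonneg (v (sch n) x)]
  have hW : ∀ n, W1 (sch n) (sch (n + 1)) ≤ V * τ0 := fun n => by
    rw [hsch_succ n]; exact W1_flowStep_le hA (hP1 n) hτ0.le
  have hvdiff : ∀ n (x : Euc d), ‖v (sch (n + 1)) x - v (sch n) x‖ ≤ L * (V * τ0) := by
    intro n x
    have h1 := hA.2.2.2.1 (sch n) (sch (n + 1)) (hP1 n) (hP1 (n + 1)) x x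
    rw [sub_self, norm_zero, zero_add] at h1
    calc ‖v (sch (n + 1)) x - v (sch n) x‖ ≤ L * W1 (sch n) (sch (n + 1)) := h1
      _ ≤ L * (V * τ0) := by nlinarith [hW n]
  set Dd : ℝ := 2 * L' * (V * τ0) with hDd
  have hDd0 : 0 ≤ Dd := by
    have := mul_pos hV hτ0
    rw [hDd]; nlinarith
  -- the three B-difference bounds
  have hB1 : ∀ n j, |B (n + 1) j - B n j| ≤ L * (V * τ0) * Hg := by
    intro n j
    have heq : B (n + 1) j - B n j
        = ∫ x, (g (sch (n + 1)) x - g (sch n) x) ∂(sch j) :=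
      (integral_sub (hgint (n + 1) j) (hgint n j)).symm
    rw [heq]
    refine habs_int j _ _ (fun x => ?_)
    have hexp : g (sch (n + 1)) x - g (sch n) x
        = (inner ℝ (v (sch (n + 1)) x - v (sch n) x) (gradient φ x) : ℝ) := by
      simp only [hg, inner_sub_left]
    rw [hexp]
    calc _ ≤ ‖v (sch (n + 1)) x - v (sch n) x‖ * ‖gradient φ x‖ := abs_real_inner_le_norm _ _
      _ ≤ L * (V * τ0) * Hg := by
          have h5 := hvdiff n x
          have h6 := hHgb x
          nlinarith [norm_nonneg (v (sch (n + 1)) x - v (sch n) x),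
            norm_nonneg (gradient φ x), mul_pos hV hτ0, hLpos.le]
  have hB2 : ∀ n, |B n (n + 1) - B n n| ≤ L' * (V * τ0) := by
    intro n
    have hcomp : Continuous (fun x => g (sch n) (x + τ0 • v (sch n) x)) :=
      (hgc n).comp (flow_cont hA (hP1 n) τ0)
    have hint2 : Integrable (fun x => g (sch n) (x + τ0 • v (sch n) x)) (sch n) := by
      haveI := (hP1 n).1
      exact integrable_of_bound hcomp (V * Hg) (fun x => hgb n _)
    have heq : B n (n + 1) - B n n
        = ∫ x, (g (sch n) (x + τ0 • v (sch n) x) - g (sch n) x) ∂(sch n) := by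
      rw [integral_sub hint2 (hgint n n)]
      congr 1
      exact hpush n _ (hgc n)
    rw [heq]
    refine habs_int n _ _ (fun x => ?_)
    calc |g (sch n) (x + τ0 • v (sch n) x) - g (sch n) x|
        ≤ L' * ‖x + τ0 • v (sch n) x - x‖ := hglip n _ _
      _ ≤ L' * (V * τ0) := by
          rw [add_sub_cancel_left]
          nlinarith [hflownorm n x, norm_nonneg (τ0 • v (sch n) x)]
  have hLHg : L * (V * τ0) * Hg ≤ L' * (V * τ0) := by
    rw [hL']
    nlinarith [mul_pos hV hτ0, mul_nonneg hH0 hV.le]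
  have hBd1 : ∀ n j, |B (n + 1) j - B n j| ≤ Dd := by
    intro n j
    calc |B (n + 1) j - B n j| ≤ L * (V * τ0) * Hg := hB1 n j
      _ ≤ Dd := by rw [hDd]; nlinarith [hLHg, mul_nonneg hL'0 (mul_pos hV hτ0).le]
  have hBd2 : ∀ n, |B n (n + 1) - B n n| ≤ Dd := by
    intro n
    calc |B n (n + 1) - B n n| ≤ L' * (V * τ0) := hB2 n
      _ ≤ Dd := by rw [hDd]; nlinarith [mul_nonneg hL'0 (mul_pos hV hτ0).le]
  have hBd3 : ∀ n, |B (n + 1) (n + 1) - B n n| ≤ Dd := by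
    intro n
    have h1 := hB1 n (n + 1)
    have h2 := hB2 n
    have h3 : B (n + 1) (n + 1) - B n n
        = (B (n + 1) (n + 1) - B n (n + 1)) + (B n (n + 1) - B n n) := by ring
    rw [h3]
    calc |_ + _| ≤ _ + _ := abs_add_le _ _
      _ ≤ L * (V * τ0) * Hg + L' * (V * τ0) := add_le_add h1 h2
      _ ≤ Dd := by rw [hDd]; nlinarith [hLHg]
  -- Taylor one-step estimate
  have htay : ∀ n, |Pn (n + 1) - Pn n - τ0 * B n n| ≤ H / 2 * (V * τ0) ^ 2 := by
    intro n
    obtain ⟨c, hc⟩ : ∃ c, ∀ x, |φ x| ≤ c := by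
      obtain ⟨c, hc⟩ := hφ.continuous.norm.bddAbove_range_of_hasCompactSupport hφc.norm
      exact ⟨c, fun x => by simpa using hc ⟨x, rfl⟩⟩
    have hφflow : Integrable (fun x => φ (x + τ0 • v (sch n) x)) (sch n) := by
      haveI := (hP1 n).1
      exact integrable_of_bound (hφ.continuous.comp (flow_cont hA (hP1 n) τ0)) c
        (fun x => hc _)
    have ha : Integrable (fun x => φ (x + τ0 • v (sch n) x) - φ x) (sch n) :=
      hφflow.sub (hφint n)
    have hb2 : Integrable (fun x => τ0 * g (sch n) x) (sch n) := (hgint n n).const_mul τ0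
    have heq : Pn (n + 1) - Pn n - τ0 * B n n
        = ∫ x, (φ (x + τ0 • v (sch n) x) - φ x - τ0 * g (sch n) x) ∂(sch n) := by
      rw [integral_sub ha hb2, integral_sub hφflow (hφint n), integral_const_mul]
      simp only [hPn, hB]
      rw [hpush n φ hφ.continuous]
    rw [heq]
    refine habs_int n _ _ (fun x => ?_)
    have hid : τ0 * g (sch n) x = fderiv ℝ φ x (τ0 • v (sch n) x) := by
      rw [(fderiv ℝ φ x).map_smul, smul_eq_mul]
      congr 1
      rw [← grad_apply hφ x (v (sch n) x), real_inner_comm]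
    rw [hid]
    calc |φ (x + τ0 • v (sch n) x) - φ x - fderiv ℝ φ x (τ0 • v (sch n) x)|
        ≤ H / 2 * ‖τ0 • v (sch n) x‖ ^ 2 := taylor_half hφ hH0 hHb x _
      _ ≤ H / 2 * (V * τ0) ^ 2 := by
          have hm := mul_le_mul (hflownorm n x) (hflownorm n x)
            (norm_nonneg _) (mul_pos hV hτ0).le
          nlinarith [hm, hH0]
  -- interp = comb on each interval
  have hcomb_eq : ∀ (n : ℕ) (t : ℝ), (n : ℝ) * τ0 ≤ t → t ≤ ((n : ℝ) + 1) * τ0 →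
      interp sch τ0 t = comb (sch n) (sch (n + 1)) ((t - n * τ0) / τ0) :=
    fun n t h1 h2 => interp_eq sch hτ0 n h1 h2
  have hvcomb : ∀ (n : ℕ) (θ : ℝ), 0 ≤ θ → θ ≤ 1 → ∀ x,
      v (comb (sch n) (sch (n + 1)) θ) x
        = (1 - θ) • v (sch n) x + θ • v (sch (n + 1)) x := by
    intro n θ h0 h1 x
    have h2 := hA.2.2.2.2 (sch n) (sch (n + 1)) (hP1 n) (hP1 (n + 1)) (1 - θ)
      (by linarith) (by linarith) x
    have h3 : (1 : ℝ) - (1 - θ) = θ := by ring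
    rw [h3] at h2
    exact h2
  have hgcomb : ∀ (n : ℕ) (θ : ℝ), 0 ≤ θ → θ ≤ 1 → ∀ x,
      g (comb (sch n) (sch (n + 1)) θ) x
        = (1 - θ) * g (sch n) x + θ * g (sch (n + 1)) x := by
    intro n θ h0 h1 x
    simp only [hg]
    rw [hvcomb n θ h0 h1 x, inner_add_left, real_inner_smul_left, real_inner_smul_left]
  have hAeq : ∀ (n : ℕ) (θ : ℝ), 0 ≤ θ → θ ≤ 1 →
      (∫ x, g (comb (sch n) (sch (n + 1)) θ) x ∂(comb (sch n) (sch (n + 1)) θ))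
        = (1 - θ) * ((1 - θ) * B n n + θ * B (n + 1) n)
          + θ * ((1 - θ) * B n (n + 1) + θ * B (n + 1) (n + 1)) := by
    intro n θ h0 h1
    have hfun : ∀ x, g (comb (sch n) (sch (n + 1)) θ) x
        = (1 - θ) * g (sch n) x + θ * g (sch (n + 1)) x := hgcomb n θ h0 h1
    have hi1 : Integrable (fun x => (1 - θ) * g (sch n) x) (sch n) :=
      (hgint n n).const_mul _
    have hi2 : Integrable (fun x => θ * g (sch (n + 1)) x) (sch n) :=
      (hgint (n + 1) n).const_mul _
    have hi3 : Integrable (fun x => (1 - θ) * g (sch n) x) (sch (n + 1)) :=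
      (hgint n (n + 1)).const_mul _
    have hi4 : Integrable (fun x => θ * g (sch (n + 1)) x) (sch (n + 1)) :=
      (hgint (n + 1) (n + 1)).const_mul _
    have hi12 : Integrable (fun x => (1 - θ) * g (sch n) x + θ * g (sch (n + 1)) x)
        (sch n) := hi1.add hi2
    have hi34 : Integrable (fun x => (1 - θ) * g (sch n) x + θ * g (sch (n + 1)) x)
        (sch (n + 1)) := hi3.add hi4
    have s1 : ∫ x, ((1 - θ) * g (sch n) x + θ * g (sch (n + 1)) x) ∂(sch n)
        = (1 - θ) * B n n + θ * B (n + 1) n := by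
      rw [integral_add hi1 hi2, integral_const_mul, integral_const_mul]
    have s2 : ∫ x, ((1 - θ) * g (sch n) x + θ * g (sch (n + 1)) x) ∂(sch (n + 1))
        = (1 - θ) * B n (n + 1) + θ * B (n + 1) (n + 1) := by
      rw [integral_add hi3 hi4, integral_const_mul, integral_const_mul]
    calc ∫ x, g (comb (sch n) (sch (n + 1)) θ) x ∂(comb (sch n) (sch (n + 1)) θ)
        = ∫ x, ((1 - θ) * g (sch n) x + θ * g (sch (n + 1)) x)
            ∂(comb (sch n) (sch (n + 1)) θ) :=
          integral_congr_ae (Filter.Eventually.of_forall hfun)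
      _ = (1 - θ) * ∫ x, ((1 - θ) * g (sch n) x + θ * g (sch (n + 1)) x) ∂(sch n)
            + θ * ∫ x, ((1 - θ) * g (sch n) x + θ * g (sch (n + 1)) x) ∂(sch (n + 1)) :=
          integral_comb h0 h1 hi12 hi34
      _ = (1 - θ) * ((1 - θ) * B n n + θ * B (n + 1) n)
            + θ * ((1 - θ) * B n (n + 1) + θ * B (n + 1) (n + 1)) := by rw [s1, s2]
  have hθmem : ∀ (n : ℕ) (τ : ℝ), τ ∈ Set.Icc ((n : ℝ) * τ0) (((n : ℝ) + 1) * τ0) →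
      0 ≤ (τ - n * τ0) / τ0 ∧ (τ - n * τ0) / τ0 ≤ 1 := by
    intro n τ hτ
    constructor
    · apply div_nonneg _ hτ0.le; linarith [hτ.1]
    · rw [div_le_one hτ0]; linarith [hτ.2]
  have hAform : ∀ (n : ℕ) (τ : ℝ), τ ∈ Set.Icc ((n : ℝ) * τ0) (((n : ℝ) + 1) * τ0) →
      A τ = (1 - (τ - n * τ0) / τ0) * ((1 - (τ - n * τ0) / τ0) * B n n
              + (τ - n * τ0) / τ0 * B (n + 1) n)
            + (τ - n * τ0) / τ0 * ((1 - (τ - n * τ0) / τ0) * B n (n + 1)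
              + (τ - n * τ0) / τ0 * B (n + 1) (n + 1)) := by
    intro n τ hτ
    obtain ⟨h0, h1⟩ := hθmem n τ hτ
    have hAτ : A τ = ∫ x, g (interp sch τ0 τ) x ∂(interp sch τ0 τ) := rfl
    rw [hAτ, hcomb_eq n τ hτ.1 hτ.2]
    exact hAeq n _ h0 h1
  have hAcont : ∀ n : ℕ, ContinuousOn A (Set.Icc ((n : ℝ) * τ0) (((n : ℝ) + 1) * τ0)) := by
    intro n
    apply ContinuousOn.congr (f := fun τ : ℝ =>
      (1 - (τ - n * τ0) / τ0) * ((1 - (τ - n * τ0) / τ0) * B n n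
        + (τ - n * τ0) / τ0 * B (n + 1) n)
      + (τ - n * τ0) / τ0 * ((1 - (τ - n * τ0) / τ0) * B n (n + 1)
        + (τ - n * τ0) / τ0 * B (n + 1) (n + 1)))
    · apply Continuous.continuousOn
      fun_prop
    · intro τ hτ
      exact hAform n τ hτ
  have hAnear : ∀ (n : ℕ) (τ : ℝ), τ ∈ Set.Icc ((n : ℝ) * τ0) (((n : ℝ) + 1) * τ0) →
      |A τ - B n n| ≤ Dd := by
    intro n τ hτ
    obtain ⟨h0, h1⟩ := hθmem n τ hτ
    set θ : ℝ := (τ - n * τ0) / τ0 with hθd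
    have heq : A τ - B n n
        = (1 - θ) * θ * (B (n + 1) n - B n n) + θ * (1 - θ) * (B n (n + 1) - B n n)
          + θ ^ 2 * (B (n + 1) (n + 1) - B n n) := by
      rw [hAform n τ hτ]; ring
    rw [heq]
    have h1θ : 0 ≤ (1 - θ) := by linarith
    have b1 : |(1 - θ) * θ * (B (n + 1) n - B n n)| ≤ (1 - θ) * θ * Dd := by
      rw [abs_mul, abs_of_nonneg (mul_nonneg h1θ h0)]
      exact mul_le_mul_of_nonneg_left (hBd1 n n) (mul_nonneg h1θ h0)
    have b2 : |θ * (1 - θ) * (B n (n + 1) - B n n)| ≤ θ * (1 - θ) * Dd := by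
      rw [abs_mul, abs_of_nonneg (mul_nonneg h0 h1θ)]
      exact mul_le_mul_of_nonneg_left (hBd2 n) (mul_nonneg h0 h1θ)
    have b3 : |θ ^ 2 * (B (n + 1) (n + 1) - B n n)| ≤ θ ^ 2 * Dd := by
      rw [abs_mul, abs_of_nonneg (sq_nonneg θ)]
      exact mul_le_mul_of_nonneg_left (hBd3 n) (sq_nonneg θ)
    calc |(1 - θ) * θ * (B (n + 1) n - B n n) + θ * (1 - θ) * (B n (n + 1) - B n n)
          + θ ^ 2 * (B (n + 1) (n + 1) - B n n)|
        ≤ |(1 - θ) * θ * (B (n + 1) n - B n n) + θ * (1 - θ) * (B n (n + 1) - B n n)|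
          + |θ ^ 2 * (B (n + 1) (n + 1) - B n n)| := abs_add_le _ _
      _ ≤ |(1 - θ) * θ * (B (n + 1) n - B n n)| + |θ * (1 - θ) * (B n (n + 1) - B n n)|
          + |θ ^ 2 * (B (n + 1) (n + 1) - B n n)| :=
          add_le_add_left (abs_add_le _ _) _
      _ ≤ (1 - θ) * θ * Dd + θ * (1 - θ) * Dd + θ ^ 2 * Dd :=
          add_le_add (add_le_add b1 b2) b3
      _ ≤ Dd := by nlinarith [mul_nonneg hDd0 (sq_nonneg (1 - θ))]
  have hFform : ∀ (n : ℕ) (t : ℝ), t ∈ Set.Icc ((n : ℝ) * τ0) (((n : ℝ) + 1) * τ0) →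
      F t = (1 - (t - n * τ0) / τ0) * Pn n + (t - n * τ0) / τ0 * Pn (n + 1) := by
    intro n t ht
    obtain ⟨h0, h1⟩ := hθmem n t ht
    have hFt : F t = ∫ x, φ x ∂(interp sch τ0 t) := rfl
    rw [hFt, hcomb_eq n t ht.1 ht.2, integral_comb h0 h1 (hφint n) (hφint (n + 1))]
  have hFn : ∀ n : ℕ, F ((n : ℝ) * τ0) = Pn n := by
    intro n
    have hmem : (n : ℝ) * τ0 ∈ Set.Icc ((n : ℝ) * τ0) (((n : ℝ) + 1) * τ0) :=
      ⟨le_refl _, by nlinarith⟩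
    rw [hFform n _ hmem, sub_self, zero_div]
    ring
  -- per-interval estimate
  have hest : ∀ (n : ℕ) (t : ℝ), t ∈ Set.Icc ((n : ℝ) * τ0) (((n : ℝ) + 1) * τ0) →
      |F t - Pn n - ∫ τ in ((n : ℝ) * τ0)..t, A τ|
        ≤ C * (1 + 2 * V) * τ0 * (t - n * τ0) := by
    intro n t ht
    obtain ⟨h0, h1⟩ := hθmem n t ht
    have hs0 : 0 ≤ t - n * τ0 := by linarith [ht.1]
    have hθτ : (t - n * τ0) / τ0 * τ0 = t - n * τ0 := by field_simp
    have hAint : IntervalIntegrable A volume ((n : ℝ) * τ0) t := by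
      apply ContinuousOn.intervalIntegrable
      rw [Set.uIcc_of_le ht.1]
      exact (hAcont n).mono (Set.Icc_subset_Icc_right ht.2)
    have hIeq : ∫ τ in ((n : ℝ) * τ0)..t, A τ
        = (∫ τ in ((n : ℝ) * τ0)..t, (A τ - B n n)) + (t - n * τ0) * B n n := by
      rw [intervalIntegral.integral_sub hAint intervalIntegrable_const,
        intervalIntegral.integral_const, smul_eq_mul]
      ring
    have hIbd : |∫ τ in ((n : ℝ) * τ0)..t, (A τ - B n n)| ≤ Dd * (t - n * τ0) := by
      have hb := intervalIntegral.norm_integral_le_of_norm_le_const (C := Dd)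
        (f := fun τ => A τ - B n n) (a := (n : ℝ) * τ0) (b := t) ?_
      · rw [Real.norm_eq_abs, abs_of_nonneg hs0] at hb
        exact hb
      · intro x hx
        rw [Set.uIoc_of_le ht.1] at hx
        have hxm : x ∈ Set.Icc ((n : ℝ) * τ0) (((n : ℝ) + 1) * τ0) :=
          ⟨hx.1.le, le_trans hx.2 ht.2⟩
        simpa using hAnear n x hxm
    have hkey : F t - Pn n - ∫ τ in ((n : ℝ) * τ0)..t, A τ
        = (t - n * τ0) / τ0 * (Pn (n + 1) - Pn n - τ0 * B n n)
          - ∫ τ in ((n : ℝ) * τ0)..t, (A τ - B n n) := by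
      rw [hIeq, hFform n t ht]
      linear_combination (B n n) * hθτ
    rw [hkey]
    have htr : |(t - n * τ0) / τ0 * (Pn (n + 1) - Pn n - τ0 * B n n)
        - ∫ τ in ((n : ℝ) * τ0)..t, (A τ - B n n)|
        ≤ |(t - n * τ0) / τ0 * (Pn (n + 1) - Pn n - τ0 * B n n)|
          + |∫ τ in ((n : ℝ) * τ0)..t, (A τ - B n n)| := by
      rw [sub_eq_add_neg]
      exact (abs_add_le _ _).trans (by rw [abs_neg])
    have ht1 : |(t - n * τ0) / τ0 * (Pn (n + 1) - Pn n - τ0 * B n n)|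
        ≤ (t - n * τ0) / τ0 * (H / 2 * (V * τ0) ^ 2) := by
      rw [abs_mul, abs_of_nonneg h0]
      exact mul_le_mul_of_nonneg_left (htay n) h0
    have harith : (t - n * τ0) / τ0 * (H / 2 * (V * τ0) ^ 2) + Dd * (t - n * τ0)
        ≤ C * (1 + 2 * V) * τ0 * (t - n * τ0) := by
      have he1 : (t - n * τ0) / τ0 * (H / 2 * (V * τ0) ^ 2)
          = (H * V ^ 2 / 2) * τ0 * ((t - n * τ0) / τ0 * τ0) := by ring
      rw [he1, hθτ, hDd]
      nlinarith [mul_nonneg (mul_nonneg (sub_nonneg.2 hC1) hτ0.le) hs0,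
        mul_nonneg (mul_nonneg (mul_nonneg (sub_nonneg.2 hC2) (by linarith : (0:ℝ) ≤ 2 * V))
          hτ0.le) hs0]
    calc |(t - n * τ0) / τ0 * (Pn (n + 1) - Pn n - τ0 * B n n)
          - ∫ τ in ((n : ℝ) * τ0)..t, (A τ - B n n)|
        ≤ _ + _ := htr
      _ ≤ (t - n * τ0) / τ0 * (H / 2 * (V * τ0) ^ 2) + Dd * (t - n * τ0) :=
          add_le_add ht1 hIbd
      _ ≤ C * (1 + 2 * V) * τ0 * (t - n * τ0) := harith
  -- grid induction
  have hgrid : ∀ n : ℕ, IntervalIntegrable A volume 0 ((n : ℝ) * τ0) ∧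
      |F ((n : ℝ) * τ0) - Pn 0 - ∫ τ in (0:ℝ)..((n : ℝ) * τ0), A τ|
        ≤ C * (1 + 2 * V) * τ0 * ((n : ℝ) * τ0) := by
    intro n
    induction n with
    | zero =>
      constructor
      · simpa using IntervalIntegrable.refl (f := A) (μ := volume) (a := 0)
      · have h00 : ((0 : ℕ) : ℝ) * τ0 = 0 := by push_cast; ring
        rw [h00]
        have hF0 : F 0 = Pn 0 := by
          have := hFn 0
          rwa [h00] at this
        rw [hF0, intervalIntegral.integral_same]
        simp
    | succ n ih =>
      have hle : (n : ℝ) * τ0 ≤ ((n : ℝ) + 1) * τ0 := by nlinarith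
      have hpc : IntervalIntegrable A volume ((n : ℝ) * τ0) (((n : ℝ) + 1) * τ0) := by
        apply ContinuousOn.intervalIntegrable
        rw [Set.uIcc_of_le hle]
        exact hAcont n
      have hII : IntervalIntegrable A volume 0 (((n : ℝ) + 1) * τ0) := ih.1.trans hpc
      have hsplit := intervalIntegral.integral_add_adjacent_intervals ih.1 hpc
      have he := hest n (((n : ℝ) + 1) * τ0) ⟨hle, le_refl _⟩
      have hcast : (((n + 1 : ℕ)) : ℝ) * τ0 = ((n : ℝ) + 1) * τ0 := by push_cast; ring
      constructor
      · rw [hcast]; exact hII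
      · rw [hcast]
        have hdecomp : F (((n : ℝ) + 1) * τ0) - Pn 0 - ∫ τ in (0:ℝ)..(((n : ℝ) + 1) * τ0), A τ
            = (F ((n : ℝ) * τ0) - Pn 0 - ∫ τ in (0:ℝ)..((n : ℝ) * τ0), A τ)
              + (F (((n : ℝ) + 1) * τ0) - Pn n
                - ∫ τ in ((n : ℝ) * τ0)..(((n : ℝ) + 1) * τ0), A τ) := by
          rw [← hsplit, hFn n]; ring
        rw [hdecomp]
        calc |_ + _| ≤ _ + _ := abs_add_le _ _
          _ ≤ C * (1 + 2 * V) * τ0 * ((n : ℝ) * τ0)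
              + C * (1 + 2 * V) * τ0 * ((((n : ℝ) + 1) * τ0) - (n : ℝ) * τ0) :=
              add_le_add ih.2 he
          _ = C * (1 + 2 * V) * τ0 * (((n : ℝ) + 1) * τ0) := by ring
  -- conclusion
  intro t ht
  have hgoal : (∫ x, φ x ∂(interp sch τ0 t)) - (∫ x, φ x ∂μbar) -
      (∫ τ in (0:ℝ)..t, ∫ x, (inner ℝ (v (interp sch τ0 τ) x) (gradient φ x) : ℝ)
        ∂(interp sch τ0 τ)) = F t - Pn 0 - ∫ τ in (0:ℝ)..t, A τ := rfl
  rw [hgoal]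
  set n : ℕ := ⌊t / τ0⌋₊ with hn
  have h1 : (n : ℝ) * τ0 ≤ t := by
    have hfl := Nat.floor_le (div_nonneg ht hτ0.le)
    calc (n : ℝ) * τ0 ≤ (t / τ0) * τ0 := by
          apply mul_le_mul_of_nonneg_right _ hτ0.le
          exact hfl
      _ = t := by field_simp
  have h2 : t ≤ ((n : ℝ) + 1) * τ0 := by
    have hlt := Nat.lt_floor_add_one (t / τ0)
    have h3 : t / τ0 < (n : ℝ) + 1 := by exact_mod_cast hlt
    have := (div_lt_iff₀ hτ0).mp h3
    linarith
  have hAint : IntervalIntegrable A volume ((n : ℝ) * τ0) t := by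
    apply ContinuousOn.intervalIntegrable
    rw [Set.uIcc_of_le h1]
    exact (hAcont n).mono (Set.Icc_subset_Icc_right h2)
  have hsplit := intervalIntegral.integral_add_adjacent_intervals (hgrid n).1 hAint
  have he := hest n t ⟨h1, h2⟩
  have hdecomp : F t - Pn 0 - ∫ τ in (0:ℝ)..t, A τ
      = (F ((n : ℝ) * τ0) - Pn 0 - ∫ τ in (0:ℝ)..((n : ℝ) * τ0), A τ)
        + (F t - Pn n - ∫ τ in ((n : ℝ) * τ0)..t, A τ) := by
    rw [← hsplit, hFn n]; ring
  rw [hdecomp]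
  calc |_ + _| ≤ _ + _ := abs_add_le _ _
    _ ≤ C * (1 + 2 * V) * τ0 * ((n : ℝ) * τ0)
        + C * (1 + 2 * V) * τ0 * (t - (n : ℝ) * τ0) := add_le_add (hgrid n).2 he
    _ = C * (1 + 2 * V) * τ0 * t := by ring

end SDAux

/-- the key estimate of Section 3.2 of the paper.
For the semi-discrete scheme with velocity satisfying Assumption A, for every
`φ ∈ C_c^∞(ℝ^d)`, setting `H = ‖D²φ‖_∞`, `L' = H V + L ‖∇φ‖_∞` and
`C = max{H V²/2, L', 2‖∇φ‖_∞}`, the interpolated curves satisfy, for all `t ∈ [0,T]`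
and all `k`:
`|∫φ dM_t^k − ∫φ dμ̄ − ∫₀ᵗ ∫ v[M_τ^k]·∇φ dM_τ^k dτ| ≤ C(1+2V) T Δt_k`;
in particular this quantity tends to `0` as `k → ∞`. -/
theorem interpolated_curves_approximate_weak_formulation
    (d : ℕ) (hd : 1 ≤ d)
    (v : Measure (Euc d) → Euc d → Euc d) (V L : ℝ)
    (hA : AssumptionA v V L)
    (T : ℝ) (hT : 0 < T)
    (μbar : Measure (Euc d)) (hμbar : P1 μbar ∧ P2 μbar)
    (Δt : ℕ → ℝ) (N : ℕ → ℕ)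
    (hΔtpos : ∀ k, 0 < Δt k) (hNT : ∀ k, (N k : ℝ) * Δt k = T)
    (hΔt0 : Tendsto Δt atTop (nhds 0))
    (φ : Euc d → ℝ) (hφ : ContDiff ℝ (⊤ : ℕ∞) φ) (hφc : HasCompactSupport φ)
    (H Hg L' C : ℝ)
    (hH : H = ⨆ x : Euc d, ‖iteratedFDeriv ℝ 2 φ x‖)
    (hHg : Hg = ⨆ x : Euc d, ‖gradient φ x‖)
    (hL' : L' = H * V + L * Hg)
    (hC : C = max (H * V ^ 2 / 2) (max L' (2 * Hg))) :
    (∀ k : ℕ, ∀ t ∈ Set.Icc (0:ℝ) T,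
      |(∫ x, φ x ∂(interp (sdScheme v μbar (Δt k)) (Δt k) t)) - (∫ x, φ x ∂μbar) -
        ∫ τ in (0:ℝ)..t,
          ∫ x, (inner ℝ (v (interp (sdScheme v μbar (Δt k)) (Δt k) τ) x)
            (gradient φ x) : ℝ) ∂(interp (sdScheme v μbar (Δt k)) (Δt k) τ)| ≤
        C * (1 + 2 * V) * T * Δt k) ∧
    ∀ t ∈ Set.Icc (0:ℝ) T,
      Tendsto (fun k =>
        |(∫ x, φ x ∂(interp (sdScheme v μbar (Δt k)) (Δt k) t)) - (∫ x, φ x ∂μbar) -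
          ∫ τ in (0:ℝ)..t,
            ∫ x, (inner ℝ (v (interp (sdScheme v μbar (Δt k)) (Δt k) τ) x)
              (gradient φ x) : ℝ) ∂(interp (sdScheme v μbar (Δt k)) (Δt k) τ)|)
        atTop (nhds 0) := by
  have hV : 0 < V := hA.1
  have hH0 : 0 ≤ H := by
    rw [hH]; exact Real.iSup_nonneg (fun x => norm_nonneg _)
  have hHg0 : 0 ≤ Hg := by
    rw [hHg]; exact Real.iSup_nonneg (fun x => norm_nonneg _)
  have hHb : ∀ x, ‖iteratedFDeriv ℝ 2 φ x‖ ≤ H := by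
    have hbdd : BddAbove (Set.range fun x : Euc d => ‖iteratedFDeriv ℝ 2 φ x‖) :=
      (ContDiff.continuous_iteratedFDeriv (by exact (WithTop.coe_le_coe.mpr (le_top : (2:ℕ∞) ≤ ⊤))) hφ).norm.bddAbove_range_of_hasCompactSupport
        ((hφc.iteratedFDeriv 2).norm)
    intro x
    rw [hH]
    exact le_ciSup hbdd x
  have hHgb : ∀ x, ‖gradient φ x‖ ≤ Hg := by
    have hbdd : BddAbove (Set.range fun x : Euc d => ‖gradient φ x‖) :=
      (SDAux.grad_cont hφ).norm.bddAbove_range_of_hasCompactSupport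
        ((SDAux.grad_compact hφc).norm)
    intro x
    rw [hHg]
    exact le_ciSup hbdd x
  have hC1 : H * V ^ 2 / 2 ≤ C := by rw [hC]; exact le_max_left _ _
  have hC2 : L' ≤ C := by
    rw [hC]; exact le_trans (le_max_left _ _) (le_max_right _ _)
  have hC0 : 0 ≤ C := by
    rw [hC]
    have h2 : (0:ℝ) ≤ 2 * Hg := by linarith
    exact le_trans h2 (le_trans (le_max_right _ _) (le_max_right _ _))
  have hpart1 : ∀ k : ℕ, ∀ t ∈ Set.Icc (0:ℝ) T,
      |(∫ x, φ x ∂(interp (sdScheme v μbar (Δt k)) (Δt k) t)) - (∫ x, φ x ∂μbar) -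
        ∫ τ in (0:ℝ)..t,
          ∫ x, (inner ℝ (v (interp (sdScheme v μbar (Δt k)) (Δt k) τ) x)
            (gradient φ x) : ℝ) ∂(interp (sdScheme v μbar (Δt k)) (Δt k) τ)| ≤
        C * (1 + 2 * V) * T * Δt k := by
    intro k t ht
    have hm := SDAux.master hA hμbar.1 (hΔtpos k) hφ hφc hH0 hHb hHg0 hHgb hL' hC1 hC2 t ht.1
    refine hm.trans ?_
    have h12V : (0:ℝ) ≤ 1 + 2 * V := by linarith
    nlinarith [mul_nonneg (mul_nonneg (mul_nonneg hC0 h12V) (hΔtpos k).le)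
      (sub_nonneg.2 ht.2)]
  refine ⟨hpart1, ?_⟩
  intro t ht
  apply squeeze_zero (fun k => abs_nonneg _) (fun k => hpart1 k t ht)
  simpa using hΔt0.const_mul (C * (1 + 2 * V) * T)

end
end

section
/- For the fully discrete scheme, if s : ℝ^d → ℝ is a bounded simple function adapted to the spatial grid, i.e. s(x) = ∑_{i∈ℤ^d} α_i 1_{E_i^k}(x) with bounded coefficients α_i ∈ ℝ, then ∫_{ℝ^d} s dλ_{n+1}^k = ∫_{ℝ^d} s ∘ γ̂_n^k dλ_n^k for every n = 0,…,N_k−1. -/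
open MeasureTheory Metric Filter

noncomputable section

section Aux

variable {d : ℕ}

lemma measurable_cellIdx {h : ℝ} : Measurable (cellIdx (d := d) h) := by
  unfold cellIdx
  exact measurable_pi_lambda _ fun l =>
    ((((EuclideanSpace.proj l : Euc d →L[ℝ] ℝ).continuous.measurable).div_const h).add_const
      (1/2 : ℝ)).floor

lemma measurableSet_cell {h : ℝ} (i : Fin d → ℤ) : MeasurableSet (cell h i) :=
  measurable_cellIdx (measurableSet_singleton i)

lemma volume_cell {h : ℝ} (hh : 0 < h) (i : Fin d → ℤ) :
    volume (cell h i) = ENNReal.ofReal (h ^ d) := by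
  have hcell : cell h i = (MeasurableEquiv.toLp 2 (Fin d → ℝ)).symm ⁻¹'
      (Set.univ.pi fun l => Set.Ico (((i l : ℝ) - 1/2) * h) (((i l : ℝ) + 1/2) * h)) := by
    ext x
    simp only [cell, cellIdx, Set.mem_setOf_eq, Set.mem_preimage, Set.mem_pi, Set.mem_univ,
      true_implies, Set.mem_Ico, funext_iff, MeasurableEquiv.toLp_symm_apply,
      MeasurableEquiv.coe_mk]
    refine forall_congr' fun l => ?_
    constructor
    · intro hl
      obtain ⟨h1, h2⟩ := Int.floor_eq_iff.mp hl
      constructor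
      · have hx : ((i l : ℝ) - 1/2) ≤ x l / h := by push_cast at h1 ⊢; linarith
        exact (le_div_iff₀ hh).mp hx
      · have hx : x l / h < (i l : ℝ) + 1/2 := by push_cast at h2 ⊢; linarith
        exact (div_lt_iff₀ hh).mp hx
    · rintro ⟨h1, h2⟩
      refine Int.floor_eq_iff.mpr ⟨?_, ?_⟩
      · have := (le_div_iff₀ hh).mpr h1; linarith
      · have := (div_lt_iff₀ hh).mpr h2; push_cast; linarith
  rw [hcell, (EuclideanSpace.volume_preserving_symm_measurableEquiv_toLp (Fin d)).measure_preimage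
    ((MeasurableSet.univ_pi fun l => measurableSet_Ico).nullMeasurableSet)]
  rw [volume_pi_pi]
  have heq : ∀ l : Fin d, volume (Set.Ico (((i l : ℝ) - 1/2) * h) (((i l : ℝ) + 1/2) * h))
      = ENNReal.ofReal h := by
    intro l; rw [Real.volume_Ico]; congr 1; ring
  simp_rw [heq, Finset.prod_const, Finset.card_univ, Fintype.card_fin,
    ← ENNReal.ofReal_pow hh.le]

lemma discretize_cell {h : ℝ} (hh : 0 < h) (μ : Measure (Euc d)) (i : Fin d → ℤ) :
    discretize h μ (cell h i) = μ (cell h i) := by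
  rw [discretize, withDensity_apply _ (measurableSet_cell i)]
  rw [setLIntegral_congr_fun (measurableSet_cell i)
    ((fun ⦃x⦄ (hx : cellIdx h x = i) =>
      show μ (cell h (cellIdx h x)) / ENNReal.ofReal (h ^ d)
        = μ (cell h i) / ENNReal.ofReal (h ^ d) by rw [hx]))]
  rw [setLIntegral_const, volume_cell hh i,
    ENNReal.div_mul_cancel (ENNReal.ofReal_pos.mpr (pow_pos hh d)).ne' ENNReal.ofReal_ne_top]

lemma map_discretize {h : ℝ} (hh : 0 < h) (μ : Measure (Euc d)) :
    (discretize h μ).map (cellIdx h) = μ.map (cellIdx h) := by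
  refine MeasureTheory.Measure.ext_of_singleton fun i => ?_
  rw [Measure.map_apply measurable_cellIdx (measurableSet_singleton i),
    Measure.map_apply measurable_cellIdx (measurableSet_singleton i)]
  exact discretize_cell hh μ i

end Aux

/-- Lemma 5 of the paper.
For the fully discrete scheme, if `s : ℝ^d → ℝ` is a bounded simple function adapted
to the spatial grid, `s(x) = ∑_i α_i 1_{E_i^k}(x)` (i.e. `s x = α (cellIdx h x)`) with
bounded coefficients, then `∫ s dλ_{n+1}^k = ∫ s ∘ γ̂_n^k dλ_n^k`. -/
theorem fdScheme_pushforward_on_simple_functions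
    (d : ℕ) (hd : 1 ≤ d)
    (v : Measure (Euc d) → Euc d → Euc d) (V : ℝ) (hV : 0 < V)
    (hbound : ∀ μ, P1 μ → ∀ x, ‖v μ x‖ ≤ V)
    (T : ℝ) (hT : 0 < T)
    (μbar : Measure (Euc d)) (hμbar : IsProbabilityMeasure μbar)
    (Δt h : ℕ → ℝ) (N : ℕ → ℕ)
    (hΔtpos : ∀ k, 0 < Δt k) (hhpos : ∀ k, 0 < h k)
    (hNT : ∀ k, (N k : ℝ) * Δt k = T)
    (α : (Fin d → ℤ) → ℝ) (hα : ∃ C, ∀ i, |α i| ≤ C)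
    (k n : ℕ) (hn : n < N k) :
    ∫ x, α (cellIdx (h k) x) ∂(fdScheme v μbar (h k) (Δt k) (n + 1)) =
      ∫ x, α (cellIdx (h k)
          (x + Δt k • vhat v (h k) (fdScheme v μbar (h k) (Δt k) n) x))
        ∂(fdScheme v μbar (h k) (Δt k) n) := by
  set μn := fdScheme v μbar (h k) (Δt k) n with hμn
  set γ := fun x : Euc d => x + Δt k • vhat v (h k) μn x with hγ
  have hγm : Measurable γ := by
    apply measurable_id.add
    exact ((measurable_of_countable (fun i => v μn (cellCenter (h k) i))).comp
      measurable_cellIdx).const_smul (Δt k)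
  have hαsm : AEStronglyMeasurable α ((μn.map γ).map (cellIdx (h k))) :=
    (measurable_of_countable α).aestronglyMeasurable
  have hαsm2 : AEStronglyMeasurable α
      ((discretize (h k) (μn.map γ)).map (cellIdx (h k))) :=
    (measurable_of_countable α).aestronglyMeasurable
  have hαm : Measurable fun x : Euc d => α (cellIdx (h k) x) :=
    (measurable_of_countable α).comp measurable_cellIdx
  have key : fdScheme v μbar (h k) (Δt k) (n + 1) = discretize (h k) (μn.map γ) := rfl
  rw [key]
  calc ∫ x, α (cellIdx (h k) x) ∂(discretize (h k) (μn.map γ))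
      = ∫ i, α i ∂((discretize (h k) (μn.map γ)).map (cellIdx (h k))) :=
        (integral_map measurable_cellIdx.aemeasurable hαsm2).symm
    _ = ∫ i, α i ∂((μn.map γ).map (cellIdx (h k))) := by
        rw [map_discretize (hhpos k)]
    _ = ∫ x, α (cellIdx (h k) x) ∂(μn.map γ) :=
        integral_map measurable_cellIdx.aemeasurable hαsm
    _ = ∫ x, α (cellIdx (h k) (γ x)) ∂μn :=
        integral_map hγm.aemeasurable hαm.aestronglyMeasurable


end
end
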